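/- arXiv:1902.08804 — 10 statements merged into one kernel-verified Lean document; each statement's English description precedes it below -/
import Mathlib

section
/- If z₀ ∈ ℂ ∖ ((−∞, ρ̂] ∪ [ρ, ∞)) satisfies ψ(z₀) = q, then z₀ = ζ or z₀ = ζ̂, and moreover q − 1/κ ≤ μ·Re(z₀). -/
/-!
Writing `s` for the principal square root of `p z₀`, the equation `ψ z₀ = q` says exactly that
`s = 1 - κ q + κ μ z₀`. Squaring gives `p z₀ = (1 - κ q + κ μ z₀)²`, a quadratic equation in `z₀`
whose discriminant is `4 d`, so `z₀ ∈ {ζ, ζ̂}`. A principal square root has nonnegative real part,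
which after dividing by `κ > 0` is the inequality `q - 1/κ ≤ μ Re z₀`.
-/

namespace Complex

lemma cpow_one_half_sq (w : ℂ) : (w ^ (1 / 2 : ℂ)) ^ 2 = w := by
  rw [one_div, cpow_ofNat_inv_pow]

lemma re_cpow_one_half_nonneg (w : ℂ) : 0 ≤ (w ^ (1 / 2 : ℂ)).re := by
  rw [one_div, cpow_inv_two_re]
  exact Real.sqrt_nonneg _

end Complex

open Complex

section NIG

variable {κ σ q θ μ d : ℝ}

lemma nig_sqrt_eq_of_laplace_exponent_eq (hκ : κ ≠ 0) {w z : ℂ}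
    (h : 1 / (κ : ℂ) - 1 / (κ : ℂ) * w ^ (1 / 2 : ℂ) + (μ : ℂ) * z = q) :
    w ^ (1 / 2 : ℂ) = 1 - κ * q + κ * μ * z := by
  have hκ' : (κ : ℂ) ≠ 0 := ofReal_ne_zero.2 hκ
  field_simp at h
  linear_combination -h

lemma nig_root_of_sq_eq (hκ : κ ≠ 0) (ha : κ * μ ^ 2 + σ ^ 2 ≠ 0)
    (hd : d = θ ^ 2 + μ ^ 2 - 2 * θ * μ * (q * κ - 1) + q * σ ^ 2 * (2 - q * κ)) {z : ℂ}
    (h : 1 - 2 * (κ : ℂ) * θ * z - κ * σ ^ 2 * z ^ 2 = (1 - κ * q + κ * μ * z) ^ 2) :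
    z = (((-θ - μ + κ * μ * q : ℝ) : ℂ) + (d : ℂ) ^ (1 / 2 : ℂ)) / ((κ * μ ^ 2 + σ ^ 2 : ℝ) : ℂ) ∨
      z = (((-θ - μ + κ * μ * q : ℝ) : ℂ) - (d : ℂ) ^ (1 / 2 : ℂ)) /
        ((κ * μ ^ 2 + σ ^ 2 : ℝ) : ℂ) := by
  set a : ℂ := ((κ * μ ^ 2 + σ ^ 2 : ℝ) : ℂ)
  set b : ℂ := ((-θ - μ + κ * μ * q : ℝ) : ℂ)
  set e : ℂ := (d : ℂ) ^ (1 / 2 : ℂ)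
  have ha' : a ≠ 0 := ofReal_ne_zero.2 ha
  have hκ' : (κ : ℂ) ≠ 0 := ofReal_ne_zero.2 hκ
  -- `h` is `κ` times this quadratic equation
  have hquad : a * (z * z) + (-2 * b) * z + q * (q * κ - 2) = 0 := by
    refine (mul_eq_zero.1 ?_).resolve_left hκ'
    simp only [a, b]
    push_cast
    linear_combination -h
  have hdisc : discrim a (-2 * b) (q * (q * κ - 2)) = (2 * e) * (2 * e) := by
    have he : e ^ 2 = d := cpow_one_half_sq _
    simp only [discrim, a, b]
    rw [show (2 * e) * (2 * e) = 4 * e ^ 2 by ring, he, hd]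
    push_cast
    ring
  rcases (quadratic_eq_zero_iff ha' hdisc z).1 hquad with hz | hz
  · left
    rw [hz]
    field_simp
  · right
    rw [hz]
    field_simp

end NIG

theorem nig_solution_is_root_of_quadratic_general
    (κ σ q θ μ d : ℝ) (ζ ζhat : ℂ)
    (hκ : 0 < κ) (hσ : 0 < σ)
    (hd : d = θ ^ 2 + μ ^ 2 - 2 * θ * μ * (q * κ - 1) + q * σ ^ 2 * (2 - q * κ))
    (hζ : ζ = (((-θ - μ + κ * μ * q : ℝ) : ℂ) + (d : ℂ) ^ (1 / 2 : ℂ)) /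
      (((κ * μ ^ 2 + σ ^ 2 : ℝ)) : ℂ))
    (hζhat : ζhat = (((-θ - μ + κ * μ * q : ℝ) : ℂ) - (d : ℂ) ^ (1 / 2 : ℂ)) /
      (((κ * μ ^ 2 + σ ^ 2 : ℝ)) : ℂ))
    (ψ : ℂ → ℂ)
    (hψ : ∀ z : ℂ, ψ z =
      1 / (κ : ℂ) -
        (1 / (κ : ℂ)) *
          (1 - 2 * (κ : ℂ) * (θ : ℂ) * z - (κ : ℂ) * (σ : ℂ) ^ 2 * z ^ 2) ^ (1 / 2 : ℂ) +
        (μ : ℂ) * z)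
    (z₀ : ℂ)
    (hsol : ψ z₀ = (q : ℂ)) :
    (z₀ = ζ ∨ z₀ = ζhat) ∧ q - 1 / κ ≤ μ * z₀.re := by
  set w : ℂ := 1 - 2 * (κ : ℂ) * θ * z₀ - κ * σ ^ 2 * z₀ ^ 2
  have hsqrt : w ^ (1 / 2 : ℂ) = 1 - κ * q + κ * μ * z₀ :=
    nig_sqrt_eq_of_laplace_exponent_eq hκ.ne' (by rw [← hψ, hsol])
  refine ⟨?_, ?_⟩
  · have ha : κ * μ ^ 2 + σ ^ 2 ≠ 0 := by positivity
    have hsq : w = (1 - κ * q + κ * μ * z₀) ^ 2 := by rw [← hsqrt, cpow_one_half_sq]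
    rw [hζ, hζhat]
    exact nig_root_of_sq_eq hκ.ne' ha hd hsq
  · have hre := re_cpow_one_half_nonneg w
    rw [hsqrt] at hre
    simp only [sub_re, add_re, one_re, mul_re, mul_im, ofReal_re, ofReal_im, mul_zero, zero_mul,
      add_zero, sub_zero] at hre
    calc q - 1 / κ = (κ * q - 1) / κ := by field_simp
      _ ≤ μ * z₀.re := by rw [div_le_iff₀ hκ]; linarith

/-- If z₀ in the cut plane satisfies ψ(z₀) = q, then z₀ = ζ or z₀ = ζ̂,
and moreover q − 1/κ ≤ μ·Re(z₀). -/
theorem nig_solution_is_root_of_quadratic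
    (κ σ q θ μ ρ ρhat d : ℝ) (ζ ζhat : ℂ)
    (hκ : 0 < κ) (hσ : 0 < σ) (hq : 0 < q)
    (hρ : ρ = (-θ + Real.sqrt (θ ^ 2 + σ ^ 2 / κ)) / σ ^ 2)
    (hρhat : ρhat = (-θ - Real.sqrt (θ ^ 2 + σ ^ 2 / κ)) / σ ^ 2)
    (hd : d = θ ^ 2 + μ ^ 2 - 2 * θ * μ * (q * κ - 1) + q * σ ^ 2 * (2 - q * κ))
    (hζ : ζ = (((-θ - μ + κ * μ * q : ℝ) : ℂ) + (d : ℂ) ^ (1 / 2 : ℂ)) /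
      (((κ * μ ^ 2 + σ ^ 2 : ℝ)) : ℂ))
    (hζhat : ζhat = (((-θ - μ + κ * μ * q : ℝ) : ℂ) - (d : ℂ) ^ (1 / 2 : ℂ)) /
      (((κ * μ ^ 2 + σ ^ 2 : ℝ)) : ℂ))
    (ψ : ℂ → ℂ)
    (hψ : ∀ z : ℂ, ψ z =
      1 / (κ : ℂ) -
        (1 / (κ : ℂ)) *
          (1 - 2 * (κ : ℂ) * (θ : ℂ) * z - (κ : ℂ) * (σ : ℂ) ^ 2 * z ^ 2) ^ (1 / 2 : ℂ) +
        (μ : ℂ) * z)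
    (z₀ : ℂ) (hz₀ : z₀.im ≠ 0 ∨ (ρhat < z₀.re ∧ z₀.re < ρ))
    (hsol : ψ z₀ = (q : ℂ)) :
    (z₀ = ζ ∨ z₀ = ζhat) ∧ q - 1 / κ ≤ μ * z₀.re :=
  nig_solution_is_root_of_quadratic_general κ σ q θ μ d ζ ζhat hκ hσ hd hζ hζhat ψ hψ z₀ hsol
end

section
/- A complex number z₀ satisfies ψ(z₀) = q if and only if z₀ is real with z₀ ∈ [ρ̂, 0) ∪ (0, ρ], z₀ = ζ or z₀ = ζ̂, and q − 1/κ ≤ μ·z₀. -/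
open Complex in
lemma my_sq_sqrt (x : ℂ) : (x ^ (1/2 : ℂ)) ^ 2 = x := by
  rw [one_div]; exact cpow_ofNat_inv_pow x 2

open Complex in
lemma my_sqrt_range (x : ℂ) :
    0 < (x ^ (1/2 : ℂ)).re ∨ ((x ^ (1/2 : ℂ)).re = 0 ∧ 0 ≤ (x ^ (1/2 : ℂ)).im) := by
  rw [one_div]
  rcases lt_or_eq_of_le (Real.sqrt_nonneg ((‖x‖ + x.re) / 2)) with h | h
  · left; rw [cpow_inv_two_re]; exact h
  · right
    have hre : (x ^ (2⁻¹ : ℂ)).re = 0 := by rw [cpow_inv_two_re]; exact h.symm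
    refine ⟨hre, ?_⟩
    have hnn : 0 ≤ (‖x‖ + x.re) / 2 := by linarith [neg_le_of_abs_le (Complex.abs_re_le_norm x)]
    have h0 : (‖x‖ + x.re) / 2 = 0 := by
      by_contra hne
      have hpos := Real.sqrt_pos.2 (lt_of_le_of_ne hnn (Ne.symm hne))
      rw [← h] at hpos; exact lt_irrefl _ hpos
    have hxre : x.re = -‖x‖ := by linarith
    have h1 : ‖x‖ ^ 2 = x.re ^ 2 + x.im ^ 2 := by
      rw [Complex.sq_norm, Complex.normSq_apply]; ring
    have hsq : x.re ^ 2 = ‖x‖ ^ 2 := by rw [hxre]; ring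
    have him2 : x.im ^ 2 = 0 := by linarith
    have him : x.im = 0 := by
      exact (pow_eq_zero_iff two_ne_zero).mp him2
    rw [cpow_inv_two_im_eq_sqrt (by rw [him])]
    exact Real.sqrt_nonneg _

lemma my_sqrt_unique {c c' : ℂ} (h : c ^ 2 = c' ^ 2)
    (hc : 0 < c.re ∨ (c.re = 0 ∧ 0 ≤ c.im))
    (hc' : 0 < c'.re ∨ (c'.re = 0 ∧ 0 ≤ c'.im)) : c = c' := by
  have : (c - c') * (c + c') = 0 := by ring_nf; linear_combination h
  rcases mul_eq_zero.mp this with h1 | h1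
  · exact sub_eq_zero.mp h1
  · have hcc : c = -c' := by linear_combination h1
    have hre : c.re = -c'.re := by rw [hcc]; simp
    have him : c.im = -c'.im := by rw [hcc]; simp
    rcases hc with h2 | ⟨h2, h3⟩ <;> rcases hc' with h4 | ⟨h4, h5⟩
    · exfalso; rw [hre] at h2; linarith
    · exfalso; rw [hre, h4] at h2; simp at h2
    · exfalso; rw [h2] at hre; linarith
    · have : c'.im = 0 := by rw [him] at h3; linarith
      apply Complex.ext <;> simp [h2, h4, him, this]

open Complex in
lemma my_sqrt_eq_iff (x c : ℂ) (hx : x = c ^ 2) :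
    x ^ (1/2 : ℂ) = c ↔ (0 < c.re ∨ (c.re = 0 ∧ 0 ≤ c.im)) := by
  constructor
  · intro h; rw [← h]; exact my_sqrt_range x
  · intro h
    exact my_sqrt_unique (by rw [my_sq_sqrt, hx]) (my_sqrt_range x) h

lemma my_E_neg {κ σ q θ μ : ℝ} (hκ : 0 < κ) (hσ : 0 < σ) (hq : 0 < q)
    (hd : θ ^ 2 + μ ^ 2 - 2 * θ * μ * (q * κ - 1) + q * σ ^ 2 * (2 - q * κ) < 0) :
    σ ^ 2 * (1 - q * κ) - κ * μ * θ < 0 := by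
  by_contra hE
  push_neg at hE
  rcases le_or_gt (q * κ) 2 with h2 | h2
  · nlinarith [sq_nonneg (θ + μ * (1 - q * κ)), mul_pos hq hκ, sq_nonneg μ, sq_nonneg σ,
      mul_nonneg (mul_nonneg hq.le (sq_nonneg σ)) (sub_nonneg.2 h2),
      mul_nonneg (mul_nonneg (mul_nonneg hq.le hκ.le) (sq_nonneg μ)) (sub_nonneg.2 h2)]
  · nlinarith [mul_nonneg hE (by linarith : (0:ℝ) ≤ q * κ - 1),
      mul_nonneg hκ.le (sq_nonneg θ), mul_nonneg hκ.le (sq_nonneg μ),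
      mul_nonneg (pow_pos hσ 2).le (sq_nonneg (q*κ-1)), pow_pos hσ 2,
      mul_pos hκ hq]

lemma my_interval {κ σ θ x : ℝ} (hκ : 0 < κ) (hσ : 0 < σ)
    (h : κ * σ ^ 2 * x ^ 2 + 2 * κ * θ * x - 1 ≤ 0) :
    (-θ - Real.sqrt (θ ^ 2 + σ ^ 2 / κ)) / σ ^ 2 ≤ x ∧
      x ≤ (-θ + Real.sqrt (θ ^ 2 + σ ^ 2 / κ)) / σ ^ 2 := by
  set r := Real.sqrt (θ ^ 2 + σ ^ 2 / κ) with hr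
  have hs2 : κ * r ^ 2 = κ * θ ^ 2 + σ ^ 2 := by
    rw [hr, Real.sq_sqrt (by positivity)]; field_simp
  have hsnn : 0 ≤ r := Real.sqrt_nonneg _
  constructor
  · rw [div_le_iff₀ (by positivity)]
    by_contra a
    push_neg at a
    have h1 : σ ^ 2 * x + θ + r < 0 := by linarith
    have h2 : σ ^ 2 * x + θ - r < 0 := by linarith
    nlinarith [mul_pos (neg_pos.2 h1) (neg_pos.2 h2), mul_pos hκ (pow_pos hσ 2),
      mul_pos hκ (mul_pos (neg_pos.2 h1) (neg_pos.2 h2))]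
  · rw [le_div_iff₀ (by positivity)]
    by_contra a
    push_neg at a
    have h1 : 0 < σ ^ 2 * x + θ - r := by linarith
    have h2 : 0 < σ ^ 2 * x + θ + r := by linarith
    nlinarith [mul_pos h1 h2, mul_pos hκ (pow_pos hσ 2), mul_pos hκ (mul_pos h1 h2)]


set_option maxHeartbeats 1000000 in
/-- A complex number z₀ satisfies ψ(z₀) = q if and only if z₀ is real with
z₀ ∈ [ρ̂, 0) ∪ (0, ρ], z₀ = ζ or z₀ = ζ̂, and q − 1/κ ≤ μ·z₀. -/
theorem nig_solution_characterization
    (κ σ q θ μ ρ ρhat d : ℝ) (ζ ζhat : ℂ)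
    (hκ : 0 < κ) (hσ : 0 < σ) (hq : 0 < q)
    (hρ : ρ = (-θ + Real.sqrt (θ ^ 2 + σ ^ 2 / κ)) / σ ^ 2)
    (hρhat : ρhat = (-θ - Real.sqrt (θ ^ 2 + σ ^ 2 / κ)) / σ ^ 2)
    (hd : d = θ ^ 2 + μ ^ 2 - 2 * θ * μ * (q * κ - 1) + q * σ ^ 2 * (2 - q * κ))
    (hζ : ζ = (((-θ - μ + κ * μ * q : ℝ) : ℂ) + (d : ℂ) ^ (1 / 2 : ℂ)) /
      (((κ * μ ^ 2 + σ ^ 2 : ℝ)) : ℂ))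
    (hζhat : ζhat = (((-θ - μ + κ * μ * q : ℝ) : ℂ) - (d : ℂ) ^ (1 / 2 : ℂ)) /
      (((κ * μ ^ 2 + σ ^ 2 : ℝ)) : ℂ))
    (ψ : ℂ → ℂ)
    (hψ : ∀ z : ℂ, ψ z =
      1 / (κ : ℂ) -
        (1 / (κ : ℂ)) *
          (1 - 2 * (κ : ℂ) * (θ : ℂ) * z - (κ : ℂ) * (σ : ℂ) ^ 2 * z ^ 2) ^ (1 / 2 : ℂ) +
        (μ : ℂ) * z)
    (z₀ : ℂ) :
    ψ z₀ = (q : ℂ) ↔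
      (z₀.im = 0 ∧
        ((ρhat ≤ z₀.re ∧ z₀.re < 0) ∨ (0 < z₀.re ∧ z₀.re ≤ ρ)) ∧
        (z₀ = ζ ∨ z₀ = ζhat) ∧
        q - 1 / κ ≤ μ * z₀.re) := by
  have hκ0 : (κ : ℂ) ≠ 0 := by exact_mod_cast hκ.ne'
  have hA : (0:ℝ) < κ * μ ^ 2 + σ ^ 2 := by positivity
  have hA0 : ((κ * μ ^ 2 + σ ^ 2 : ℝ) : ℂ) ≠ 0 := by exact_mod_cast hA.ne'
  set s : ℂ := (d : ℂ) ^ (1 / 2 : ℂ) with hsdef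
  have hs2 : s ^ 2 = (d : ℂ) := my_sq_sqrt _
  have hs2' : s ^ 2 = (θ:ℂ)^2 + (μ:ℂ)^2 - 2*(θ:ℂ)*(μ:ℂ)*((q:ℂ)*(κ:ℂ)-1) + (q:ℂ)*(σ:ℂ)^2*(2-(q:ℂ)*(κ:ℂ)) := by
    rw [hs2, hd]; push_cast; ring
  set P : ℂ := 1 - 2 * (κ : ℂ) * (θ : ℂ) * z₀ - (κ : ℂ) * (σ : ℂ) ^ 2 * z₀ ^ 2 with hPdef
  set C : ℂ := 1 - (κ : ℂ) * (q : ℂ) + (κ : ℂ) * (μ : ℂ) * z₀ with hCdef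
  -- Step 1
  have step1 : ψ z₀ = (q : ℂ) ↔ P ^ (1/2 : ℂ) = C := by
    rw [hψ]
    constructor
    · intro h
      rw [← hPdef] at h
      field_simp at h
      linear_combination -h
    · intro h
      rw [h, hCdef]
      field_simp
      ring
  -- Step 3 : roots
  have hfact : P - C ^ 2 = -((κ : ℂ) * ((κ * μ ^ 2 + σ ^ 2 : ℝ):ℂ)) * (z₀ - ζ) * (z₀ - ζhat) := by
    rw [hζ, hζhat, hPdef, hCdef]
    have hA0' : (κ:ℂ) * (μ:ℂ) ^ 2 + (σ:ℂ) ^ 2 ≠ 0 := by push_cast at hA0; exact hA0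
    push_cast
    field_simp
    linear_combination -(κ:ℂ) * hs2'
  have step3 : P = C ^ 2 ↔ (z₀ = ζ ∨ z₀ = ζhat) := by
    constructor
    · intro h
      have h1 : -((κ : ℂ) * ((κ * μ ^ 2 + σ ^ 2 : ℝ):ℂ)) * (z₀ - ζ) * (z₀ - ζhat) = 0 := by
        rw [← hfact, h]; ring
      have h2 : (z₀ - ζ) * (z₀ - ζhat) = 0 := by
        rcases mul_eq_zero.mp h1 with h3 | h3
        · rcases mul_eq_zero.mp h3 with h4 | h4
          · exact absurd h4 (by push_cast at hA0; simp [hκ0, hA0])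
          · rw [h4]; ring
        · rw [h3]; ring
      rcases mul_eq_zero.mp h2 with h3 | h3
      · exact Or.inl (sub_eq_zero.mp h3)
      · exact Or.inr (sub_eq_zero.mp h3)
    · intro h
      have : (z₀ - ζ) * (z₀ - ζhat) = 0 := by
        rcases h with h | h <;> rw [h] <;> ring
      have h1 : P - C ^ 2 = 0 := by rw [hfact, mul_assoc, this, mul_zero]
      linear_combination h1
  -- real/imaginary parts of C
  have hCre : C.re = 1 - κ * q + κ * μ * z₀.re := by
    rw [hCdef]
    simp [Complex.add_re, Complex.sub_re, Complex.mul_re, Complex.mul_im]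
  have hCim : C.im = κ * μ * z₀.im := by
    rw [hCdef]
    simp [Complex.add_im, Complex.sub_im, Complex.mul_im, Complex.mul_re]
  constructor
  · intro h
    have hW : P ^ (1/2 : ℂ) = C := step1.mp h
    have hPC : P = C ^ 2 := by rw [← my_sq_sqrt P, hW]
    have hR : 0 < C.re ∨ (C.re = 0 ∧ 0 ≤ C.im) := by rw [← hW]; exact my_sqrt_range P
    have hroot : z₀ = ζ ∨ z₀ = ζhat := step3.mp hPC
    have hCre0 : 0 ≤ C.re := by rcases hR with h' | h'; exacts [h'.le, h'.1.ge]
    rcases lt_or_ge d 0 with hdneg | hdnn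
    · exfalso
      have hsre : s.re = 0 := by
        rw [hsdef, one_div, Complex.cpow_inv_two_re]
        rw [show ‖(d:ℂ)‖ = -d by rw [Complex.norm_real, Real.norm_eq_abs, abs_of_neg hdneg]]
        simp
      have hzre : z₀.re = (-θ - μ + κ * μ * q) / (κ * μ ^ 2 + σ ^ 2) := by
        rcases hroot with h' | h'
        · rw [h', hζ, Complex.div_ofReal_re]
          simp [Complex.add_re, hsre]
        · rw [h', hζhat, Complex.div_ofReal_re]
          simp [Complex.sub_re, hsre]
      have hE : σ ^ 2 * (1 - q * κ) - κ * μ * θ < 0 :=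
        my_E_neg hκ hσ hq (by rw [← hd]; exact hdneg)
      rw [hCre, hzre] at hCre0
      have h1 : 0 ≤ (1 - κ * q + κ * μ * ((-θ - μ + κ * μ * q) / (κ * μ ^ 2 + σ ^ 2))) *
          (κ * μ ^ 2 + σ ^ 2) := mul_nonneg hCre0 hA.le
      have h2 : (1 - κ * q + κ * μ * ((-θ - μ + κ * μ * q) / (κ * μ ^ 2 + σ ^ 2))) *
          (κ * μ ^ 2 + σ ^ 2) = (1 - κ * q) * (κ * μ ^ 2 + σ ^ 2) + κ * μ * (-θ - μ + κ * μ * q) := by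
        field_simp
      rw [h2] at h1
      nlinarith [h1, hE]
    · have hs_real : s = ((Real.sqrt d : ℝ) : ℂ) := by
        rw [hsdef, show (1/2 : ℂ) = ((1/2 : ℝ) : ℂ) by norm_num, ← Complex.ofReal_cpow hdnn]
        norm_cast
        exact (Real.sqrt_eq_rpow d).symm
      obtain ⟨x, hx⟩ : ∃ x : ℝ, z₀ = (x : ℂ) := by
        rcases hroot with h' | h'
        · exact ⟨(-θ - μ + κ * μ * q + Real.sqrt d) / (κ * μ ^ 2 + σ ^ 2),
            by rw [h', hζ, hs_real]; push_cast; ring⟩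
        · exact ⟨(-θ - μ + κ * μ * q - Real.sqrt d) / (κ * μ ^ 2 + σ ^ 2),
            by rw [h', hζhat, hs_real]; push_cast; ring⟩
      have him : z₀.im = 0 := by rw [hx]; simp
      have hxre : z₀.re = x := by rw [hx]; simp
      have hrealeq : 1 - 2 * κ * θ * x - κ * σ ^ 2 * x ^ 2 = (1 - κ * q + κ * μ * x) ^ 2 := by
        have h' := hPC
        rw [hPdef, hCdef, hx] at h'
        exact_mod_cast h'
      have hCrex : C.re = 1 - κ * q + κ * μ * x := by rw [hCre, hxre]
      rw [hCrex] at hCre0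
      have hineq : q - 1 / κ ≤ μ * z₀.re := by
        rw [hxre]
        have h2 : q - 1 / κ = (κ * q - 1) / κ := by field_simp
        rw [h2, div_le_iff₀ hκ]
        nlinarith [hCre0]
      have hquad : κ * σ ^ 2 * x ^ 2 + 2 * κ * θ * x - 1 ≤ 0 := by
        nlinarith [sq_nonneg (1 - κ * q + κ * μ * x)]
      have hival := my_interval hκ hσ hquad
      have hx0 : x ≠ 0 := by
        intro h0
        rw [h0] at hrealeq hCre0
        norm_num at hrealeq hCre0
        nlinarith [mul_pos hκ hq]
      refine ⟨him, ?_, hroot, hineq⟩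
      rw [hρ, hρhat, hxre]
      rcases lt_or_gt_of_ne hx0 with h' | h'
      · exact Or.inl ⟨hival.1, h'⟩
      · exact Or.inr ⟨h', hival.2⟩
  · rintro ⟨him, hint, hroot, hineq⟩
    have hPC : P = C ^ 2 := step3.mpr hroot
    apply step1.mpr
    rw [my_sqrt_eq_iff P C hPC]
    have hCim0 : C.im = 0 := by rw [hCim, him]; ring
    have hCre0 : 0 ≤ C.re := by
      rw [hCre]
      have h1 : κ * (q - 1 / κ) ≤ κ * (μ * z₀.re) := mul_le_mul_of_nonneg_left hineq hκ.le
      have h2 : κ * (1 / κ) = 1 := by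
        rw [mul_one_div, div_self hκ.ne']
      clear hPC hψ hζ hζhat hs2 hs2' step1 step3 hfact hCre hCim hCim0
      linarith [h1, h2]
    rcases eq_or_lt_of_le hCre0 with h' | h'
    · exact Or.inr ⟨h'.symm, by rw [hCim0]⟩
    · exact Or.inl h'
end

section
/- If ζ satisfies ψ(ζ) = q, then ζ > 0; if ζ̂ satisfies ψ(ζ̂) = q, then ζ̂ < 0. Consequently, if both ζ and ζ̂ satisfy the equation ψ(z) = q, then ρ̂ ≤ ζ̂ < 0 < ζ ≤ ρ. -/
lemma cpow_half_sq (z : ℂ) : (z ^ (1/2 : ℂ)) ^ 2 = z := by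
  have := Complex.cpow_ofNat_inv_pow z 2
  norm_num at this ⊢
  exact this

lemma cpow_half_re_im (z : ℂ) :
    (z ^ (1/2 : ℂ)).re = ‖z‖ ^ (1/2 : ℝ) * Real.cos (z.arg * (1/2)) ∧
    (z ^ (1/2 : ℂ)).im = ‖z‖ ^ (1/2 : ℝ) * Real.sin (z.arg * (1/2)) := by
  have h : (1/2 : ℂ) = ((1/2 : ℝ) : ℂ) := by norm_num
  rw [h, Complex.cpow_ofReal]
  constructor <;> simp only [Complex.add_re, Complex.add_im, Complex.mul_re, Complex.mul_im,
    Complex.ofReal_re, Complex.ofReal_im, Complex.I_re, Complex.I_im] <;> ring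

lemma cpow_half_re_nonneg (z : ℂ) : 0 ≤ (z ^ (1/2 : ℂ)).re := by
  rw [(cpow_half_re_im z).1]
  have h1 := Complex.neg_pi_lt_arg z
  have h2 := Complex.arg_le_pi z
  have hc : 0 ≤ Real.cos (z.arg * (1/2)) :=
    Real.cos_nonneg_of_mem_Icc ⟨by linarith, by linarith⟩
  exact mul_nonneg (Real.rpow_nonneg (norm_nonneg z) _) hc

lemma cpow_half_im_nonneg (z : ℂ) (h0 : (z ^ (1/2 : ℂ)).re = 0) : 0 ≤ (z ^ (1/2 : ℂ)).im := by
  rw [(cpow_half_re_im z).2]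
  rw [(cpow_half_re_im z).1] at h0
  have h1 := Complex.neg_pi_lt_arg z
  have h2 := Complex.arg_le_pi z
  rcases mul_eq_zero.1 h0 with ha | hc
  · rw [ha]; simp
  · have hpos : ¬ (z.arg * (1/2) ∈ Set.Ioo (-(Real.pi/2)) (Real.pi/2)) := by
      intro hm
      exact absurd hc (ne_of_gt (Real.cos_pos_of_mem_Ioo hm))
    have : Real.pi / 2 ≤ z.arg * (1/2) := by
      by_contra hlt
      exact hpos ⟨by linarith, by linarith⟩
    have hs : 0 ≤ Real.sin (z.arg * (1/2)) := by
      apply Real.sin_nonneg_of_nonneg_of_le_pi <;> nlinarith [Real.pi_pos]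
    exact mul_nonneg (Real.rpow_nonneg (norm_nonneg z) _) hs

lemma R1 (κ σ q θ μ t : ℝ) (hκ : 0 < κ) (hσ : 0 < σ) (hq : 0 < q)
    (hs : 0 ≤ 1 - q*κ + κ*μ*t)
    (hp : (1 - q*κ + κ*μ*t)^2 = 1 - 2*κ*θ*t - κ*σ^2*t^2)
    (hbig : 0 ≤ μ*(1 - q*κ + κ*μ*t) + σ^2*t + θ) : 0 < t := by
  by_contra hcon
  push_neg at hcon
  have hqκ : 0 < q*κ := mul_pos hq hκ
  have ht0 : t ≠ 0 := by
    rintro rfl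
    simp only [mul_zero, add_zero, sub_zero] at hs hp
    nlinarith [mul_nonneg hqκ.le hs]
  have ht : t < 0 := lt_of_le_of_ne hcon ht0
  have key1 : q*κ*(q*κ-2) =
      (-2*κ*t)*(μ*(1-q*κ+κ*μ*t)+σ^2*t+θ) + κ*σ^2*t^2 + κ^2*μ^2*t^2 := by
    linear_combination hp
  have hterm1 : 0 ≤ (-2*κ*t)*(μ*(1-q*κ+κ*μ*t)+σ^2*t+θ) :=
    mul_nonneg (by nlinarith) hbig
  have hterm2 : 0 < κ*σ^2*t^2 :=
    mul_pos (mul_pos hκ (pow_pos hσ 2)) (pow_two_pos_of_ne_zero ht0)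
  have hterm3 : 0 ≤ κ^2*μ^2*t^2 := by positivity
  have hq2 : 2 < q*κ := by nlinarith [key1, hterm1, hterm2, hterm3]
  have hμt : 0 < κ*μ*t := by nlinarith
  have hμ : μ < 0 := by
    by_contra h
    push_neg at h
    nlinarith [mul_nonneg (mul_nonneg hκ.le h) (neg_nonneg.2 ht.le)]
  have hκμ : κ*μ < 0 := mul_neg_of_pos_of_neg hκ hμ
  rcases hs.eq_or_lt with hseq | hspos
  · -- s = 0
    rw [← hseq] at hp hbig
    simp only [mul_zero, zero_add] at hbig
    have hp0 : 1-2*κ*θ*t-κ*σ^2*t^2 = 0 := by simpa using hp.symm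
    nlinarith [mul_nonneg (mul_nonneg hκ.le (neg_nonneg.2 ht.le)) hbig,
      mul_nonneg (mul_nonneg hκ.le (sq_nonneg σ)) (sq_nonneg t)]
  · -- s > 0
    set x₀ := (q*κ - 1)/(κ*μ) with hx₀def
    have hx₀ : κ*μ*x₀ = q*κ - 1 := by
      rw [hx₀def]; field_simp [hμ.ne, hκ.ne']
    have hdiff : κ*μ*(t - x₀) = 1 - q*κ + κ*μ*t := by linear_combination -hx₀
    have htx : t < x₀ := by
      by_contra h
      push_neg at h
      have := mul_nonpos_of_nonpos_of_nonneg hκμ.le (sub_nonneg.2 h)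
      rw [mul_assoc] at hdiff
      linarith [hdiff, hspos]
    have hx₀neg : x₀ < 0 := by
      by_contra h
      push_neg at h
      have := mul_nonpos_of_nonpos_of_nonneg hκμ.le h
      rw [mul_assoc] at hx₀
      linarith
    have hG2 : (κ*μ*x₀-(q*κ-1))^2 = 0 := by rw [hx₀]; ring
    have key2 : -(1-2*κ*θ*x₀-κ*σ^2*x₀^2) =
        ((1-q*κ+κ*μ*t)^2 - (1-2*κ*θ*t-κ*σ^2*t^2))
        + κ*(x₀-t)*(2*(μ*(1-q*κ+κ*μ*t)+σ^2*t+θ) + (κ*μ^2+σ^2)*(x₀-t))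
        - (κ*μ*x₀-(q*κ-1))^2 := by ring
    have P1 : 0 ≤ 2*κ*(x₀-t)*(μ*(1-q*κ+κ*μ*t)+σ^2*t+θ) :=
      mul_nonneg (mul_nonneg (by linarith) (by linarith)) hbig
    have P2 : 0 < κ*(κ*μ^2+σ^2)*((x₀-t)*(x₀-t)) :=
      mul_pos (mul_pos hκ (by positivity)) (mul_pos (by linarith) (by linarith))
    have hpx₀ : 1-2*κ*θ*x₀-κ*σ^2*x₀^2 < 0 := by nlinarith [key2, hp, hG2, P1, P2]
    have hpt : 0 ≤ 1-2*κ*θ*t-κ*σ^2*t^2 := hp ▸ sq_nonneg _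
    have key3 : (-t)*(1-2*κ*θ*x₀-κ*σ^2*x₀^2) =
        (-x₀)*(1-2*κ*θ*t-κ*σ^2*t^2) + (x₀-t) + κ*σ^2*(t*x₀)*(x₀-t) := by ring
    have f1 : 0 ≤ (-x₀)*(1-2*κ*θ*t-κ*σ^2*t^2) := mul_nonneg (by linarith) hpt
    have f2 : 0 < κ*σ^2*(t*x₀)*(x₀-t) :=
      mul_pos (mul_pos (mul_pos hκ (pow_pos hσ 2)) (mul_pos_of_neg_of_neg ht hx₀neg))
        (by linarith)
    have f3 : 0 < (-t)*(-(1-2*κ*θ*x₀-κ*σ^2*x₀^2)) := mul_pos (by linarith) (by linarith)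
    linarith [key3, f1, f2, f3]

lemma R2aux (κ σ q θ μ x : ℝ) (hκ : 0 < κ) (hσ : 0 < σ) (hq : 0 < q) (hq2 : 2 < q*κ)
    (hspos : 0 < 1 - q*κ + κ*μ*x)
    (hid : μ*(1 - q*κ + κ*μ*x) + σ^2*x + θ = 0)
    (hgap : 1 - 2*κ*θ*x - κ*σ^2*x^2 < (1 - q*κ + κ*μ*x)^2)
    (hμ : μ < 0) : False := by
  have hκμ : κ*μ < 0 := mul_neg_of_pos_of_neg hκ hμ
  set x₀ := (q*κ - 1)/(κ*μ) with hx₀def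
  have hx₀ : κ*μ*x₀ = q*κ - 1 := by rw [hx₀def]; field_simp [hμ.ne, hκ.ne']
  have hdiff : κ*μ*(x - x₀) = 1 - q*κ + κ*μ*x := by linear_combination -hx₀
  have hxx₀ : x < x₀ := by
    by_contra h
    push_neg at h
    have := mul_nonpos_of_nonpos_of_nonneg hκμ.le (sub_nonneg.2 h)
    rw [mul_assoc] at hdiff
    linarith [hdiff, hspos]
  have hx₀neg : x₀ < 0 := by
    by_contra h
    push_neg at h
    have := mul_nonpos_of_nonpos_of_nonneg hκμ.le h
    rw [mul_assoc] at hx₀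
    linarith
  have hG2 : (κ*μ*x₀-(q*κ-1))^2 = 0 := by rw [hx₀]; ring
  have key2 : -(1-2*κ*θ*x₀-κ*σ^2*x₀^2) =
      ((1-q*κ+κ*μ*x)^2 - (1-2*κ*θ*x-κ*σ^2*x^2))
      + κ*(x₀-x)*(2*(μ*(1-q*κ+κ*μ*x)+σ^2*x+θ) + (κ*μ^2+σ^2)*(x₀-x))
      - (κ*μ*x₀-(q*κ-1))^2 := by ring
  have P1 : κ*(x₀-x)*(2*(μ*(1-q*κ+κ*μ*x)+σ^2*x+θ)) = 0 := by rw [hid]; ring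
  have P2 : 0 < κ*(κ*μ^2+σ^2)*((x₀-x)*(x₀-x)) :=
    mul_pos (mul_pos hκ (by positivity)) (mul_pos (by linarith) (by linarith))
  have hpx₀ : 1-2*κ*θ*x₀-κ*σ^2*x₀^2 < 0 := by nlinarith [key2, hG2, P1, P2, hgap]
  have hμs : 0 < (-μ)*(1 - q*κ + κ*μ*x) := mul_pos (neg_pos.2 hμ) hspos
  have h2θ : 0 < 2*θ + σ^2*x₀ := by
    linarith [hid, hμs, mul_nonneg (sq_nonneg σ) (sub_nonneg.2 hxx₀.le),
      mul_pos (pow_pos hσ 2) (neg_pos.2 hx₀neg)]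
  linarith [hpx₀, mul_pos (mul_pos hκ (neg_pos.2 hx₀neg)) h2θ]

lemma R2 (κ σ q θ μ x : ℝ) (hκ : 0 < κ) (hσ : 0 < σ) (hq : 0 < q) (hq2 : 2 < q*κ)
    (hs : 0 ≤ 1 - q*κ + κ*μ*x)
    (hid : μ*(1 - q*κ + κ*μ*x) + σ^2*x + θ = 0)
    (hgap : 1 - 2*κ*θ*x - κ*σ^2*x^2 < (1 - q*κ + κ*μ*x)^2) : False := by
  rcases hs.eq_or_lt with hseq | hspos
  · have hθ : θ = -σ^2*x := by
      rw [← hseq] at hid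
      simp at hid
      linarith
    rw [hθ] at hgap
    rw [← hseq] at hgap
    nlinarith [hgap, mul_nonneg (mul_nonneg hκ.le (sq_nonneg σ)) (sq_nonneg x)]
  · have hκμx : 0 < κ*μ*x := by nlinarith [hspos, hq2]
    rcases lt_trichotomy μ 0 with hμ | hμ | hμ
    · exact R2aux κ σ q θ μ x hκ hσ hq hq2 hspos hid hgap hμ
    · rw [hμ] at hκμx; simp at hκμx
    · apply R2aux κ σ q (-θ) (-μ) (-x) hκ hσ hq hq2
      · linarith [hspos]
      · linear_combination -hid
      · linarith [hgap]
      · linarith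

lemma ofReal_cpow_half {c : ℝ} (hc : 0 ≤ c) :
    ((c : ℝ) : ℂ) ^ (1/2 : ℂ) = ((Real.sqrt c : ℝ) : ℂ) := by
  rw [show (1/2 : ℂ) = ((1/2 : ℝ) : ℂ) by norm_num, ← Complex.ofReal_cpow hc,
    Real.sqrt_eq_rpow]

lemma ofReal_cpow_half_neg {c : ℝ} (hc : c < 0) :
    ((c : ℝ) : ℂ) ^ (1/2 : ℂ) = ((Real.sqrt (-c) : ℝ) : ℂ) * Complex.I := by
  rw [Complex.ofReal_cpow_of_nonpos hc.le]
  have h1 : (-(c:ℝ) : ℂ) = ((-c : ℝ) : ℂ) := by push_cast; ring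
  rw [h1, ofReal_cpow_half (by linarith : (0:ℝ) ≤ -c)]
  congr 1
  have h2 : (Real.pi : ℂ) * Complex.I * (1/2) = ((Real.pi/2 : ℝ) : ℂ) * Complex.I := by
    push_cast; ring
  rw [h2, Complex.exp_mul_I]
  simp [← Complex.ofReal_cos, ← Complex.ofReal_sin, Real.cos_pi_div_two, Real.sin_pi_div_two]

lemma bound_up (κ σ θ x : ℝ) (hκ : 0 < κ) (hσ : 0 < σ)
    (hp : 0 ≤ 1 - 2*κ*θ*x - κ*σ^2*x^2) :
    x ≤ (-θ + Real.sqrt (θ^2 + σ^2/κ))/σ^2 := by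
  have hR2 : Real.sqrt (θ^2+σ^2/κ)^2 = θ^2+σ^2/κ := Real.sq_sqrt (by positivity)
  have hR0 := Real.sqrt_nonneg (θ^2+σ^2/κ)
  rw [le_div_iff₀ (by positivity : (0:ℝ) < σ^2)]
  by_contra h
  push_neg at h
  have h1 : 0 < θ + σ^2*x := by nlinarith
  have h2 : θ^2+σ^2/κ < (θ+σ^2*x)^2 := by
    nlinarith [mul_pos (show (0:ℝ) < θ+σ^2*x - Real.sqrt (θ^2+σ^2/κ) by nlinarith)
      (show (0:ℝ) < θ+σ^2*x + Real.sqrt (θ^2+σ^2/κ) by nlinarith), hR2]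
  have hRk : κ*(θ^2+σ^2/κ) = κ*θ^2 + σ^2 := by field_simp
  nlinarith [mul_pos hκ (sub_pos.2 h2), hRk, mul_nonneg (sq_nonneg σ) hp]

lemma bound_low (κ σ θ x : ℝ) (hκ : 0 < κ) (hσ : 0 < σ)
    (hp : 0 ≤ 1 - 2*κ*θ*x - κ*σ^2*x^2) :
    (-θ - Real.sqrt (θ^2 + σ^2/κ))/σ^2 ≤ x := by
  have h := bound_up κ σ (-θ) (-x) hκ hσ (by nlinarith)
  rw [show (-θ)^2 + σ^2/κ = θ^2 + σ^2/κ by ring] at h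
  have hσ2 : (0:ℝ) < σ^2 := by positivity
  rw [le_div_iff₀ hσ2] at h
  rw [div_le_iff₀ hσ2]
  linarith
set_option maxHeartbeats 1600000 in
/-- If ζ satisfies ψ(ζ) = q, then ζ > 0; if ζ̂ satisfies ψ(ζ̂) = q, then
ζ̂ < 0. Consequently, if both satisfy the equation, then ρ̂ ≤ ζ̂ < 0 < ζ ≤ ρ. -/
theorem nig_roots_sign
    (κ σ q θ μ ρ ρhat d : ℝ) (ζ ζhat : ℂ)
    (hκ : 0 < κ) (hσ : 0 < σ) (hq : 0 < q)
    (hρ : ρ = (-θ + Real.sqrt (θ ^ 2 + σ ^ 2 / κ)) / σ ^ 2)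
    (hρhat : ρhat = (-θ - Real.sqrt (θ ^ 2 + σ ^ 2 / κ)) / σ ^ 2)
    (hd : d = θ ^ 2 + μ ^ 2 - 2 * θ * μ * (q * κ - 1) + q * σ ^ 2 * (2 - q * κ))
    (hζ : ζ = (((-θ - μ + κ * μ * q : ℝ) : ℂ) + (d : ℂ) ^ (1 / 2 : ℂ)) /
      (((κ * μ ^ 2 + σ ^ 2 : ℝ)) : ℂ))
    (hζhat : ζhat = (((-θ - μ + κ * μ * q : ℝ) : ℂ) - (d : ℂ) ^ (1 / 2 : ℂ)) /
      (((κ * μ ^ 2 + σ ^ 2 : ℝ)) : ℂ))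
    (ψ : ℂ → ℂ)
    (hψ : ∀ z : ℂ, ψ z =
      1 / (κ : ℂ) -
        (1 / (κ : ℂ)) *
          (1 - 2 * (κ : ℂ) * (θ : ℂ) * z - (κ : ℂ) * (σ : ℂ) ^ 2 * z ^ 2) ^ (1 / 2 : ℂ) +
        (μ : ℂ) * z) :
    (ψ ζ = (q : ℂ) → ζ.im = 0 ∧ 0 < ζ.re) ∧
    (ψ ζhat = (q : ℂ) → ζhat.im = 0 ∧ ζhat.re < 0) ∧
    (ψ ζ = (q : ℂ) → ψ ζhat = (q : ℂ) →
      ρhat ≤ ζhat.re ∧ ζhat.re < 0 ∧ 0 < ζ.re ∧ ζ.re ≤ ρ) := by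
  have hκC : (κ : ℂ) ≠ 0 := Complex.ofReal_ne_zero.2 hκ.ne'
  have hA : (0:ℝ) < κ*μ^2+σ^2 := by positivity
  have hA0 : (κ*μ^2+σ^2 : ℝ) ≠ 0 := hA.ne'
  rcases le_or_gt 0 d with hd0 | hd0
  · -- d ≥ 0 : real roots
    have hr0 : 0 ≤ Real.sqrt d := Real.sqrt_nonneg d
    have hr2 : Real.sqrt d ^ 2 = d := Real.sq_sqrt hd0
    set r := Real.sqrt d with hrdef
    have hsd : (d : ℂ) ^ (1/2 : ℂ) = ((r : ℝ) : ℂ) := ofReal_cpow_half hd0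
    set t : ℝ := (-θ - μ + κ*μ*q + r)/(κ*μ^2+σ^2) with htdef
    set t' : ℝ := (-θ - μ + κ*μ*q - r)/(κ*μ^2+σ^2) with ht'def
    have hζt : ζ = (t : ℂ) := by
      rw [hζ, hsd, htdef]; push_cast; ring
    have hζt' : ζhat = (t' : ℂ) := by
      rw [hζhat, hsd, ht'def]; push_cast; ring
    have hAt : (κ*μ^2+σ^2)*t = -θ - μ + κ*μ*q + r := by
      rw [htdef]; field_simp
    have hAt' : (κ*μ^2+σ^2)*t' = -θ - μ + κ*μ*q - r := by
      rw [ht'def]; field_simp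
    have hrd : r^2 = θ^2+μ^2-2*θ*μ*(q*κ-1)+q*σ^2*(2-q*κ) := by rw [hr2, hd]
    have hQ : (1-q*κ+κ*μ*t)^2 = 1-2*κ*θ*t-κ*σ^2*t^2 := by
      have H : ((κ*μ^2+σ^2)*(1-q*κ) + κ*μ*((κ*μ^2+σ^2)*t))^2 =
          (κ*μ^2+σ^2)^2 - 2*κ*θ*(κ*μ^2+σ^2)*((κ*μ^2+σ^2)*t)
            - κ*σ^2*((κ*μ^2+σ^2)*t)^2 := by
        rw [hAt]
        linear_combination (κ*(κ*μ^2+σ^2)) * hrd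
      have h2 : (κ*μ^2+σ^2)^2 * ((1-q*κ+κ*μ*t)^2) =
          (κ*μ^2+σ^2)^2 * (1-2*κ*θ*t-κ*σ^2*t^2) := by linear_combination H
      exact mul_left_cancel₀ (pow_ne_zero 2 hA0) h2
    have hQ' : (1-q*κ+κ*μ*t')^2 = 1-2*κ*θ*t'-κ*σ^2*t'^2 := by
      have H : ((κ*μ^2+σ^2)*(1-q*κ) + κ*μ*((κ*μ^2+σ^2)*t'))^2 =
          (κ*μ^2+σ^2)^2 - 2*κ*θ*(κ*μ^2+σ^2)*((κ*μ^2+σ^2)*t')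
            - κ*σ^2*((κ*μ^2+σ^2)*t')^2 := by
        rw [hAt']
        linear_combination (κ*(κ*μ^2+σ^2)) * hrd
      have h2 : (κ*μ^2+σ^2)^2 * ((1-q*κ+κ*μ*t')^2) =
          (κ*μ^2+σ^2)^2 * (1-2*κ*θ*t'-κ*σ^2*t'^2) := by linear_combination H
      exact mul_left_cancel₀ (pow_ne_zero 2 hA0) h2
    have hbig : μ*(1-q*κ+κ*μ*t)+σ^2*t+θ = r := by linear_combination hAt
    have hbig' : μ*(1-q*κ+κ*μ*t')+σ^2*t'+θ = -r := by linear_combination hAt'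
    have hkey : ∀ u : ℝ, ψ (u : ℂ) = (q : ℂ) →
        (1-q*κ+κ*μ*u)^2 = 1-2*κ*θ*u-κ*σ^2*u^2 → 0 ≤ 1-q*κ+κ*μ*u := by
      intro u hEq hQu
      rw [hψ] at hEq
      have hpc : (1 - 2 * (κ:ℂ) * (θ:ℂ) * (u:ℂ) - (κ:ℂ) * (σ:ℂ)^2 * (u:ℂ)^2)
          = ((1-2*κ*θ*u-κ*σ^2*u^2 : ℝ) : ℂ) := by push_cast; ring
      rw [hpc] at hEq
      have hpu0 : 0 ≤ 1-2*κ*θ*u-κ*σ^2*u^2 := hQu ▸ sq_nonneg _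
      rw [ofReal_cpow_half hpu0] at hEq
      have hEqR : 1/κ - 1/κ * Real.sqrt (1-2*κ*θ*u-κ*σ^2*u^2) + μ*u = q := by
        exact_mod_cast hEq
      have habs : Real.sqrt (1-2*κ*θ*u-κ*σ^2*u^2) = |1-q*κ+κ*μ*u| := by
        rw [← hQu, Real.sqrt_sq_eq_abs]
      rw [habs] at hEqR
      rcases abs_cases (1-q*κ+κ*μ*u) with ⟨he, hge⟩ | ⟨he, hlt⟩
      · exact hge
      · exfalso
        rw [he] at hEqR
        field_simp at hEqR
        nlinarith [hEqR, hlt, hκ]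
    have hζre : ζ.re = t := by rw [hζt]; simp
    have hζim : ζ.im = 0 := by rw [hζt]; simp
    have hζre' : ζhat.re = t' := by rw [hζt']; simp
    have hζim' : ζhat.im = 0 := by rw [hζt']; simp
    have hpos : ψ ζ = (q:ℂ) → 0 < t := by
      intro hEq
      rw [hζt] at hEq
      exact R1 κ σ q θ μ t hκ hσ hq (hkey t hEq hQ) hQ (by linarith [hbig, hr0])
    have hneg : ψ ζhat = (q:ℂ) → t' < 0 := by
      intro hEq
      rw [hζt'] at hEq
      have hs' := hkey t' hEq hQ'
      have h := R1 κ σ q (-θ) (-μ) (-t') hκ hσ hq (by linarith [hs'])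
        (by linear_combination hQ') (by linarith [hbig', hr0])
      linarith
    have hbup : t ≤ ρ := by
      rw [hρ]; exact bound_up κ σ θ t hκ hσ (hQ ▸ sq_nonneg _)
    have hblow : ρhat ≤ t' := by
      rw [hρhat]; exact bound_low κ σ θ t' hκ hσ (hQ' ▸ sq_nonneg _)
    refine ⟨fun hEq => ⟨hζim, hζre ▸ hpos hEq⟩,
      fun hEq => ⟨hζim', hζre' ▸ hneg hEq⟩,
      fun hEq hEq' => ⟨hζre' ▸ hblow, hζre' ▸ hneg hEq', hζre ▸ hpos hEq, hζre ▸ hbup⟩⟩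
  · -- d < 0 : no solutions
    have hrn : (0:ℝ) < -d := by linarith
    set r := Real.sqrt (-d) with hrdef
    have hr2 : r^2 = -d := Real.sq_sqrt hrn.le
    have hsd : (d : ℂ) ^ (1/2 : ℂ) = ((r : ℝ) : ℂ) * Complex.I :=
      ofReal_cpow_half_neg hd0
    set x : ℝ := (-θ - μ + κ*μ*q)/(κ*μ^2+σ^2) with hxdef
    have hAx : (κ*μ^2+σ^2)*x = -θ - μ + κ*μ*q := by rw [hxdef]; field_simp
    have hq2 : 2 < q*κ := by
      by_contra h
      push_neg at h
      nlinarith [sq_nonneg (θ+μ-q*κ*μ),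
        mul_nonneg (mul_nonneg hq.le (by linarith : (0:ℝ) ≤ 2-q*κ)) hA.le]
    have hid : μ*(1-q*κ+κ*μ*x)+σ^2*x+θ = 0 := by linear_combination hAx
    have hgap : 1-2*κ*θ*x-κ*σ^2*x^2 < (1-q*κ+κ*μ*x)^2 := by
      have H : ((κ*μ^2+σ^2)*(1-q*κ) + κ*μ*((κ*μ^2+σ^2)*x))^2 -
          ((κ*μ^2+σ^2)^2 - 2*κ*θ*(κ*μ^2+σ^2)*((κ*μ^2+σ^2)*x)
            - κ*σ^2*((κ*μ^2+σ^2)*x)^2) = (κ*μ^2+σ^2)*(κ*(-d)) := by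
        rw [hAx, hd]; ring
      have hpos : (0:ℝ) < (κ*μ^2+σ^2)*(κ*(-d)) :=
        mul_pos hA (mul_pos hκ hrn)
      by_contra hle
      push_neg at hle
      have hEqA : (κ*μ^2+σ^2)^2 * ((1-q*κ+κ*μ*x)^2 - (1-2*κ*θ*x-κ*σ^2*x^2))
          = (κ*μ^2+σ^2)*(κ*(-d)) := by linear_combination H
      have hnp : (κ*μ^2+σ^2)^2 * ((1-q*κ+κ*μ*x)^2 - (1-2*κ*θ*x-κ*σ^2*x^2)) ≤ 0 :=
        mul_nonpos_of_nonneg_of_nonpos (sq_nonneg _) (by linarith)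
      linarith
    have hfalse : ∀ z : ℂ, z.re = x → ψ z = (q : ℂ) → False := by
      intro z hzre hEq
      rw [hψ] at hEq
      have hPv : (1 - 2*(κ:ℂ)*(θ:ℂ)*z - (κ:ℂ)*(σ:ℂ)^2*z^2)^(1/2:ℂ)
          = 1 - (q:ℂ)*(κ:ℂ) + (κ:ℂ)*(μ:ℂ)*z := by
        have hk : (κ:ℂ) * (1/(κ:ℂ)) = 1 := by field_simp
        linear_combination (-(κ:ℂ)) * hEq +
          (1 - (1 - 2*(κ:ℂ)*(θ:ℂ)*z - (κ:ℂ)*(σ:ℂ)^2*z^2)^(1/2:ℂ)) * hk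
      have h1 := cpow_half_re_nonneg (1 - 2*(κ:ℂ)*(θ:ℂ)*z - (κ:ℂ)*(σ:ℂ)^2*z^2)
      rw [hPv] at h1
      have h2 : (1 - (q:ℂ)*(κ:ℂ) + (κ:ℂ)*(μ:ℂ)*z).re = 1 - q*κ + κ*μ*x := by
        simp [Complex.add_re, Complex.sub_re, Complex.mul_re, hzre]
      rw [h2] at h1
      exact R2 κ σ q θ μ x hκ hσ hq hq2 h1 hid hgap
    have hζxy : ζ = ((x:ℝ):ℂ) + ((r/(κ*μ^2+σ^2) : ℝ):ℂ) * Complex.I := by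
      rw [hζ, hsd, hxdef]; push_cast; ring
    have hζxy' : ζhat = ((x:ℝ):ℂ) - ((r/(κ*μ^2+σ^2) : ℝ):ℂ) * Complex.I := by
      rw [hζhat, hsd, hxdef]; push_cast; ring
    have hζre : ζ.re = x := by
      rw [hζxy]
      simp only [Complex.add_re, Complex.mul_re, Complex.ofReal_re, Complex.ofReal_im,
        Complex.I_re, Complex.I_im]
      ring
    have hζre' : ζhat.re = x := by
      rw [hζxy']
      simp only [Complex.sub_re, Complex.mul_re, Complex.ofReal_re, Complex.ofReal_im,
        Complex.I_re, Complex.I_im]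
      ring
    exact ⟨fun hEq => (hfalse ζ hζre hEq).elim,
      fun hEq => (hfalse ζhat hζre' hEq).elim,
      fun hEq _ => (hfalse ζ hζre hEq).elim⟩
end

section
/- If ζ is real (i.e., d ≥ 0), then ρ̂ ≤ ζ ≤ ρ; likewise, if ζ̂ is real, then ρ̂ ≤ ζ̂ ≤ ρ. -/
lemma between_of_prod_nonneg (a b z : ℝ) (hab : a < b)
    (h : 0 ≤ (b - z) * (z - a)) : a ≤ z ∧ z ≤ b := by
  constructor <;> nlinarith

set_option maxHeartbeats 1000000 in
/-- If ζ is real (i.e. d ≥ 0), then ρ̂ ≤ ζ ≤ ρ; likewise for ζ̂. -/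
theorem nig_real_roots_between_rhos
    (κ σ q θ μ ρ ρhat d ζ ζhat : ℝ)
    (hκ : 0 < κ) (hσ : 0 < σ) (hq : 0 < q)
    (hρ : ρ = (-θ + Real.sqrt (θ ^ 2 + σ ^ 2 / κ)) / σ ^ 2)
    (hρhat : ρhat = (-θ - Real.sqrt (θ ^ 2 + σ ^ 2 / κ)) / σ ^ 2)
    (hd : d = θ ^ 2 + μ ^ 2 - 2 * θ * μ * (q * κ - 1) + q * σ ^ 2 * (2 - q * κ))
    (hdpos : 0 ≤ d)
    (hζ : ζ = (-θ - μ + κ * μ * q + Real.sqrt d) / (κ * μ ^ 2 + σ ^ 2))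
    (hζhat : ζhat = (-θ - μ + κ * μ * q - Real.sqrt d) / (κ * μ ^ 2 + σ ^ 2)) :
    (ρhat ≤ ζ ∧ ζ ≤ ρ) ∧ (ρhat ≤ ζhat ∧ ζhat ≤ ρ) := by
  have hσ2 : (0:ℝ) < σ ^ 2 := by positivity
  have hA : (0:ℝ) < κ * μ ^ 2 + σ ^ 2 := by positivity
  set s := Real.sqrt (θ ^ 2 + σ ^ 2 / κ) with hsdef
  have hargpos : (0:ℝ) < θ ^ 2 + σ ^ 2 / κ := by positivity
  have hs2 : s ^ 2 = θ ^ 2 + σ ^ 2 / κ := Real.sq_sqrt hargpos.le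
  have hspos : 0 < s := Real.sqrt_pos.mpr hargpos
  set r := Real.sqrt d with hrdef
  have hr2 : r ^ 2 = d := Real.sq_sqrt hdpos
  -- denominator-free versions of the definitions
  have hs2' : κ * s ^ 2 = κ * θ ^ 2 + σ ^ 2 := by
    rw [hs2]; field_simp
  have hρ' : σ ^ 2 * ρ = -θ + s := by
    rw [hρ]; field_simp
  have hρh' : σ ^ 2 * ρhat = -θ - s := by
    rw [hρhat]; field_simp
  have hζ' : (κ * μ ^ 2 + σ ^ 2) * ζ = -θ - μ + κ * μ * q + r := by
    rw [hζ]; field_simp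
  have hζh' : (κ * μ ^ 2 + σ ^ 2) * ζhat = -θ - μ + κ * μ * q - r := by
    rw [hζhat]; field_simp
  have hρρ : ρhat < ρ := by nlinarith [hρ', hρh', hspos, hσ2]
  -- the main quadratic inequality for each root
  have main : ∀ z : ℝ,
      ((κ * μ ^ 2 + σ ^ 2) * z = -θ - μ + κ * μ * q + r ∨
        (κ * μ ^ 2 + σ ^ 2) * z = -θ - μ + κ * μ * q - r) →
      0 ≤ (ρ - z) * (z - ρhat) := by
    intro z hz
    have hident : κ * (((κ * μ ^ 2 + σ ^ 2) * s) ^ 2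
          - (σ ^ 2 * ((κ * μ ^ 2 + σ ^ 2) * z) + (κ * μ ^ 2 + σ ^ 2) * θ) ^ 2)
        = σ ^ 2 * ((κ * μ ^ 2 + σ ^ 2) * (1 - q * κ)
          + κ * μ * ((κ * μ ^ 2 + σ ^ 2) * z)) ^ 2 := by
      rcases hz with hz' | hz' <;> rw [hz'] <;>
        linear_combination ((κ * μ ^ 2 + σ ^ 2) ^ 2) * hs2' +
          (-(κ * σ ^ 2 * (κ * μ ^ 2 + σ ^ 2))) * hr2 +
          (-(κ * σ ^ 2 * (κ * μ ^ 2 + σ ^ 2))) * hd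
    have hkey : κ * (κ * μ ^ 2 + σ ^ 2) ^ 2
          * ((σ ^ 2 * ρ - σ ^ 2 * z) * (σ ^ 2 * z - σ ^ 2 * ρhat))
        = σ ^ 2 * ((κ * μ ^ 2 + σ ^ 2) * (1 - q * κ)
          + κ * μ * ((κ * μ ^ 2 + σ ^ 2) * z)) ^ 2 := by
      linear_combination hident
        + (κ * (κ * μ ^ 2 + σ ^ 2) ^ 2 * (σ ^ 2 * z - σ ^ 2 * ρhat)) * hρ'
        + (-(κ * (κ * μ ^ 2 + σ ^ 2) ^ 2 * (-θ + s - σ ^ 2 * z))) * hρh'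
    have h5 : 0 ≤ (σ ^ 2 * ρ - σ ^ 2 * z) * (σ ^ 2 * z - σ ^ 2 * ρhat) := by
      nlinarith [hkey, mul_nonneg hσ2.le (sq_nonneg ((κ * μ ^ 2 + σ ^ 2) * (1 - q * κ)
        + κ * μ * ((κ * μ ^ 2 + σ ^ 2) * z))), mul_pos hκ (mul_pos hA hA)]
    nlinarith [h5, mul_pos hσ2 hσ2]
  exact ⟨between_of_prod_nonneg _ _ _ hρρ (main ζ (Or.inl hζ')),
    between_of_prod_nonneg _ _ _ hρρ (main ζhat (Or.inr hζh'))⟩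
end

section
/- Neither ρ = ζ̂ nor ρ̂ = ζ is possible; that is, ζ̂ ≠ ρ and ζ ≠ ρ̂ always hold. -/
/-!
Write `A = -θ - μ + κμq` and `B = κμ² + σ²`. If `ζ̂ = ρ`, then `√d = A - Bρ` is real, so `ρ`
solves `(Bz - A)² = d`, which (up to the factor `κ / B`) is the equation `p(z) = (1 - qκ + κμz)²`. As `p(ρ) = 0`, this forces `1 - qκ + κμρ = 0`,
and then `√d = A - Bρ = -(θ + σ²ρ) = -√(θ² + σ²/κ) < 0`, which is absurd for a principal square
root. The case `ζ = ρ̂` is symmetric, with `√d = Bρ̂ - A = θ + σ²ρ̂ = -√(θ² + σ²/κ)`.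
-/

lemma Complex.sq_eq_and_nonneg_of_ofReal_cpow_half_eq {x r : ℝ}
    (h : (x : ℂ) ^ (1 / 2 : ℂ) = r) : x = r ^ 2 ∧ 0 ≤ r := by
  have hx : x = r ^ 2 := by
    have hsq : ((x : ℂ) ^ (1 / 2 : ℂ)) ^ 2 = x := by
      rw [one_div, Complex.cpow_ofNat_inv_pow]
    rw [h] at hsq
    exact_mod_cast hsq.symm
  refine ⟨hx, ?_⟩
  have hsqrt : ((Real.sqrt x : ℝ) : ℂ) = r := by
    rw [← h, Real.sqrt_eq_rpow, Complex.ofReal_cpow (hx ▸ sq_nonneg r)]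
    norm_num
  exact (Complex.ofReal_injective hsqrt) ▸ Real.sqrt_nonneg x

section NIG

variable (κ σ q θ μ : ℝ)

def nigP (z : ℝ) : ℝ := 1 - 2 * κ * θ * z - κ * σ ^ 2 * z ^ 2

def nigDisc : ℝ := θ ^ 2 + μ ^ 2 - 2 * θ * μ * (q * κ - 1) + q * σ ^ 2 * (2 - q * κ)

variable {κ σ θ}

lemma nigP_eq_zero_of_sq_eq (hκ : κ ≠ 0) (hσ : σ ≠ 0) {z : ℝ}
    (h : (σ ^ 2 * z + θ) ^ 2 = θ ^ 2 + σ ^ 2 / κ) : nigP κ σ θ z = 0 := by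
  field_simp at h
  have hσp : σ ^ 2 * nigP κ σ θ z = 0 := by
    unfold nigP
    linear_combination (-1) * h
  exact (mul_eq_zero.mp hσp).resolve_left (pow_ne_zero 2 hσ)

variable (κ σ θ)

lemma mul_sq_sub_nigP (z : ℝ) :
    (κ * μ ^ 2 + σ ^ 2) * ((1 - q * κ + κ * μ * z) ^ 2 - nigP κ σ θ z) =
      κ * (((κ * μ ^ 2 + σ ^ 2) * z - (-θ - μ + κ * μ * q)) ^ 2 - nigDisc κ σ q θ μ) := by
  unfold nigP nigDisc
  ring

variable {κ σ q θ μ}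

lemma sub_eq_neg_of_nigP_eq_zero (hκ : 0 < κ) (hσ : σ ≠ 0) {z : ℝ} (hp : nigP κ σ θ z = 0)
    (hz : ((κ * μ ^ 2 + σ ^ 2) * z - (-θ - μ + κ * μ * q)) ^ 2 = nigDisc κ σ q θ μ) :
    (-θ - μ + κ * μ * q) - (κ * μ ^ 2 + σ ^ 2) * z = -(θ + σ ^ 2 * z) := by
  have hB : κ * μ ^ 2 + σ ^ 2 ≠ 0 := by positivity
  have hlin : 1 - q * κ + κ * μ * z = 0 := by
    have := mul_sq_sub_nigP κ σ q θ μ z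
    rw [hp, hz, sub_self, mul_zero, sub_zero, mul_eq_zero] at this
    exact pow_eq_zero_iff two_ne_zero |>.mp (this.resolve_left hB)
  linear_combination (-μ) * hlin

end NIG

theorem nig_roots_never_equal_opposite_rhos_general
    (κ σ q θ μ ρ ρhat d : ℝ) (ζ ζhat : ℂ)
    (hκ : 0 < κ) (hσ : 0 < σ)
    (hρ : ρ = (-θ + Real.sqrt (θ ^ 2 + σ ^ 2 / κ)) / σ ^ 2)
    (hρhat : ρhat = (-θ - Real.sqrt (θ ^ 2 + σ ^ 2 / κ)) / σ ^ 2)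
    (hd : d = θ ^ 2 + μ ^ 2 - 2 * θ * μ * (q * κ - 1) + q * σ ^ 2 * (2 - q * κ))
    (hζ : ζ = (((-θ - μ + κ * μ * q : ℝ) : ℂ) + (d : ℂ) ^ (1 / 2 : ℂ)) /
      (((κ * μ ^ 2 + σ ^ 2 : ℝ)) : ℂ))
    (hζhat : ζhat = (((-θ - μ + κ * μ * q : ℝ) : ℂ) - (d : ℂ) ^ (1 / 2 : ℂ)) /
      (((κ * μ ^ 2 + σ ^ 2 : ℝ)) : ℂ)) :
    ζhat ≠ (ρ : ℂ) ∧ ζ ≠ (ρhat : ℂ) := by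
  set s := Real.sqrt (θ ^ 2 + σ ^ 2 / κ)
  have hs : 0 < s := Real.sqrt_pos.mpr (by positivity)
  have hs2 : s ^ 2 = θ ^ 2 + σ ^ 2 / κ := Real.sq_sqrt (by positivity)
  have hB : ((κ * μ ^ 2 + σ ^ 2 : ℝ) : ℂ) ≠ 0 :=
    Complex.ofReal_ne_zero.mpr (by positivity)
  have hd' : d = nigDisc κ σ q θ μ := hd
  constructor
  · intro h
    obtain ⟨hdr, hr⟩ := Complex.sq_eq_and_nonneg_of_ofReal_cpow_half_eq
      (r := (-θ - μ + κ * μ * q) - (κ * μ ^ 2 + σ ^ 2) * ρ) <| by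
        rw [hζhat, div_eq_iff hB] at h; push_cast at h ⊢; linear_combination -h
    have hρs : σ ^ 2 * ρ + θ = s := by rw [hρ]; field_simp; ring
    have hsub := sub_eq_neg_of_nigP_eq_zero hκ hσ.ne'
      (nigP_eq_zero_of_sq_eq hκ.ne' hσ.ne' (hρs ▸ hs2)) (by rw [← hd', hdr]; ring)
    linarith
  · intro h
    obtain ⟨hdr, hr⟩ := Complex.sq_eq_and_nonneg_of_ofReal_cpow_half_eq
      (r := (κ * μ ^ 2 + σ ^ 2) * ρhat - (-θ - μ + κ * μ * q)) <| by
        rw [hζ, div_eq_iff hB] at h; push_cast at h ⊢; linear_combination h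
    have hρs : σ ^ 2 * ρhat + θ = -s := by rw [hρhat]; field_simp; ring
    have hsub := sub_eq_neg_of_nigP_eq_zero hκ hσ.ne'
      (nigP_eq_zero_of_sq_eq hκ.ne' hσ.ne' (by rw [hρs, neg_sq, hs2])) (by rw [← hd', hdr])
    linarith

/-- Neither ρ = ζ̂ nor ρ̂ = ζ is possible: ζ̂ ≠ ρ and ζ ≠ ρ̂ always hold. -/
theorem nig_roots_never_equal_opposite_rhos
    (κ σ q θ μ ρ ρhat d : ℝ) (ζ ζhat : ℂ)
    (hκ : 0 < κ) (hσ : 0 < σ) (hq : 0 < q)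
    (hρ : ρ = (-θ + Real.sqrt (θ ^ 2 + σ ^ 2 / κ)) / σ ^ 2)
    (hρhat : ρhat = (-θ - Real.sqrt (θ ^ 2 + σ ^ 2 / κ)) / σ ^ 2)
    (hd : d = θ ^ 2 + μ ^ 2 - 2 * θ * μ * (q * κ - 1) + q * σ ^ 2 * (2 - q * κ))
    (hζ : ζ = (((-θ - μ + κ * μ * q : ℝ) : ℂ) + (d : ℂ) ^ (1 / 2 : ℂ)) /
      (((κ * μ ^ 2 + σ ^ 2 : ℝ)) : ℂ))
    (hζhat : ζhat = (((-θ - μ + κ * μ * q : ℝ) : ℂ) - (d : ℂ) ^ (1 / 2 : ℂ)) /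
      (((κ * μ ^ 2 + σ ^ 2 : ℝ)) : ℂ)) :
    ζhat ≠ (ρ : ℂ) ∧ ζ ≠ (ρhat : ℂ) :=
  nig_roots_never_equal_opposite_rhos_general κ σ q θ μ ρ ρhat d ζ ζhat hκ hσ hρ hρhat hd hζ hζhat
end

section
/- For every z ∈ ℂ ∖ ((−∞, ρ̂] ∪ [ρ, ∞)) the value p(z) does not lie in (−∞, 0], and the function ψ(z) := 1/κ − (1/κ)·√(p(z)) + μz (principal branch of the square root) is holomorphic on the cut plane ℂ ∖ ((−∞, ρ̂] ∪ [ρ, ∞)). -/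
/-!
Since `ρ + ρ̂ = -2θ/σ²` and `κσ² ρ ρ̂ = -1`,
`p(z) = κσ² (ρ - z)(z - ρ̂)`. For `z = x + iy` and `m = (ρ + ρ̂)/2` this has imaginary part
`-2κσ² y (x - m)` and real part `κσ² ((ρ - x)(x - ρ̂) + y²)`: off the real axis `p(z)` is real
only on the line `x = m`, where its real part is `κσ² ((ρ - ρ̂)²/4 + y²) > 0`, and on `(ρ̂, ρ)`
it is positive. Hence `p` maps the cut plane into the slit plane, where the principal square
root is holomorphic.
-/

open Complex

/-- The plane cut along `(-∞, a]` and `[b, ∞)`. -/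
def cutPlane (a b : ℝ) : Set ℂ := {z : ℂ | z.im ≠ 0 ∨ (a < z.re ∧ z.re < b)}

theorem mul_sub_mul_sub_mem_slitPlane {c a b : ℝ} (hc : 0 < c) {z : ℂ} (hz : z ∈ cutPlane a b) :
    (c : ℂ) * (b - z) * (z - a) ∈ slitPlane := by
  have him : ((c : ℂ) * (b - z) * (z - a)).im = c * z.im * (a + b - 2 * z.re) := by
    simp only [mul_im, mul_re, sub_im, sub_re, ofReal_im, ofReal_re]; ring
  have hre : ((c : ℂ) * (b - z) * (z - a)).re = c * ((b - z.re) * (z.re - a) + z.im ^ 2) := by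
    simp only [mul_im, mul_re, sub_im, sub_re, ofReal_im, ofReal_re]; ring
  rw [mem_slitPlane_iff, him, hre]
  by_cases hy : z.im = 0
  · obtain ⟨ha, hb⟩ := hz.resolve_left (not_not.mpr hy)
    left
    rw [hy]
    have : 0 < (b - z.re) * (z.re - a) := mul_pos (by linarith) (by linarith)
    positivity
  · by_cases hx : a + b - 2 * z.re = 0
    · left
      have hsq : (b - z.re) * (z.re - a) = ((b - a) / 2) ^ 2 := by
        have : z.re = (a + b) / 2 := by linarith
        rw [this]; ring
      rw [hsq]
      have : 0 < z.im ^ 2 := by positivity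
      positivity
    · exact Or.inr (mul_ne_zero (mul_ne_zero hc.ne' hy) hx)

theorem not_im_eq_zero_and_re_nonpos_of_mem_slitPlane {w : ℂ} (hw : w ∈ slitPlane) :
    ¬(w.im = 0 ∧ w.re ≤ 0) := fun ⟨him, hre⟩ =>
  (mem_slitPlane_iff.mp hw).elim (fun hpos => hpos.not_ge hre) (fun hne => hne him)

section Roots

variable {κ σ θ : ℝ}

theorem nig_roots_add (hσ : σ ≠ 0) :
    (-θ + √(θ ^ 2 + σ ^ 2 / κ)) / σ ^ 2 + (-θ - √(θ ^ 2 + σ ^ 2 / κ)) / σ ^ 2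
      = -2 * θ / σ ^ 2 := by
  field_simp; ring

theorem nig_roots_mul (hκ : 0 < κ) (hσ : σ ≠ 0) :
    κ * σ ^ 2 * ((-θ + √(θ ^ 2 + σ ^ 2 / κ)) / σ ^ 2 * ((-θ - √(θ ^ 2 + σ ^ 2 / κ)) / σ ^ 2))
      = -1 := by
  have hs : κ * √(θ ^ 2 + σ ^ 2 / κ) ^ 2 = κ * θ ^ 2 + σ ^ 2 := by
    rw [Real.sq_sqrt (by positivity)]; field_simp
  generalize √(θ ^ 2 + σ ^ 2 / κ) = s at hs ⊢
  field_simp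
  linear_combination (-1) * hs

/-- `1 - 2κθz - κσ²z² = κσ² (ρ - z)(z - ρ̂)`. -/
theorem nig_quadratic_eq_mul_roots (hκ : 0 < κ) (hσ : σ ≠ 0) (z : ℂ) :
    1 - 2 * (κ : ℂ) * θ * z - (κ : ℂ) * (σ : ℂ) ^ 2 * z ^ 2
      = ((κ * σ ^ 2 : ℝ) : ℂ) * (((-θ + √(θ ^ 2 + σ ^ 2 / κ)) / σ ^ 2 : ℝ) - z)
          * (z - ((-θ - √(θ ^ 2 + σ ^ 2 / κ)) / σ ^ 2 : ℝ)) := by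
  set ρ := (-θ + √(θ ^ 2 + σ ^ 2 / κ)) / σ ^ 2
  set ρhat := (-θ - √(θ ^ 2 + σ ^ 2 / κ)) / σ ^ 2
  have hsum : ((ρ + ρhat : ℝ) : ℂ) = ((-2 * θ / σ ^ 2 : ℝ) : ℂ) :=
    congrArg _ (nig_roots_add hσ)
  have hprod : ((κ * σ ^ 2 * (ρ * ρhat) : ℝ) : ℂ) = ((-1 : ℝ) : ℂ) :=
    congrArg _ (nig_roots_mul hκ hσ)
  have hσC : (σ : ℂ) ≠ 0 := ofReal_ne_zero.mpr hσ
  push_cast at hsum hprod ⊢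
  field_simp at hsum
  linear_combination (-(κ : ℂ) * z) * hsum + hprod

end Roots

/-- For z in the cut plane ℂ ∖ ((−∞, ρ̂] ∪ [ρ, ∞)), p(z) never lies in
(−∞, 0], and ψ(z) = 1/κ − (1/κ)·√(p(z)) + μz is holomorphic on the cut plane. -/
theorem nig_laplace_exponent_holomorphic
    (κ σ θ μ ρ ρhat : ℝ)
    (hκ : 0 < κ) (hσ : 0 < σ)
    (hρ : ρ = (-θ + Real.sqrt (θ ^ 2 + σ ^ 2 / κ)) / σ ^ 2)
    (hρhat : ρhat = (-θ - Real.sqrt (θ ^ 2 + σ ^ 2 / κ)) / σ ^ 2)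
    (p : ℂ → ℂ)
    (hp : ∀ z : ℂ, p z = 1 - 2 * (κ : ℂ) * (θ : ℂ) * z - (κ : ℂ) * (σ : ℂ) ^ 2 * z ^ 2)
    (ψ : ℂ → ℂ)
    (hψ : ∀ z : ℂ, ψ z = 1 / (κ : ℂ) - (1 / (κ : ℂ)) * (p z) ^ (1 / 2 : ℂ) + (μ : ℂ) * z) :
    (∀ z : ℂ, (z.im ≠ 0 ∨ (ρhat < z.re ∧ z.re < ρ)) →
      ¬((p z).im = 0 ∧ (p z).re ≤ 0)) ∧
    DifferentiableOn ℂ ψ {z : ℂ | z.im ≠ 0 ∨ (ρhat < z.re ∧ z.re < ρ)} := by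
  have hp_slit : Set.MapsTo p (cutPlane ρhat ρ) slitPlane := fun z hz => by
    rw [hp, nig_quadratic_eq_mul_roots hκ hσ.ne', ← hρ, ← hρhat]
    exact mul_sub_mul_sub_mem_slitPlane (by positivity) hz
  have hp_diff : Differentiable ℂ p := by
    rw [funext hp]; fun_prop
  refine ⟨fun z hz => not_im_eq_zero_and_re_nonpos_of_mem_slitPlane (hp_slit hz), ?_⟩
  rw [funext hψ]
  exact ((differentiableOn_const _).sub ((differentiableOn_const _).mul
    (hp_diff.differentiableOn.cpow_const hp_slit))).add
    ((differentiableOn_const _).mul differentiableOn_id)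
end

section
/- For every complex z with Re(z) < R, the following identity holds (both sides being finite): ∫_{(0,∞)} log(u/(u − z)) dτ(u) = ∫_0^∞ (e^{zx} − 1)·(1/x)·(∫_{(0,∞)} e^{−ux} dτ(u)) dx, where log denotes the principal branch of the complex logarithm. (This identifies the GGC-like representation of the Laplace exponent with its Lévy–Khintchine representation, the Lévy density being π(x) = (1/x)∫ e^{−ux} dτ(u).) -/
open MeasureTheory

open Filter

lemma aux_norm_cexp_sub_one_le (w : ℂ) :
    ‖Complex.exp w - 1‖ ≤ ‖w‖ * Real.exp ‖w‖ := by
  have hder : ∀ s ∈ Set.uIcc (0:ℝ) 1,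
      HasDerivAt (fun s : ℝ => Complex.exp (s * w)) (Complex.exp (s * w) * w) s := by
    intro s _
    have h1 : HasDerivAt (fun y : ℂ => Complex.exp (y * w)) (Complex.exp (s * w) * w) (s : ℂ) := by
      exact ((Complex.hasDerivAt_exp ((s : ℂ) * w)).comp (s : ℂ)
        ((hasDerivAt_id ((s:ℂ))).mul_const w)).congr_deriv (by simp)
    exact h1.comp_ofReal
  have hint : IntervalIntegrable (fun s : ℝ => Complex.exp (s * w) * w) MeasureTheory.volume 0 1 :=
    (Continuous.intervalIntegrable (by fun_prop)) _ _
  have key : (∫ s in (0:ℝ)..1, Complex.exp (s * w) * w)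
      = Complex.exp ((1:ℝ) * w) - Complex.exp ((0:ℝ) * w) :=
    intervalIntegral.integral_eq_sub_of_hasDerivAt hder hint
  have h2 : Complex.exp w - 1 = ∫ s in (0:ℝ)..1, Complex.exp (s * w) * w := by
    rw [key]; simp
  rw [h2]
  have := intervalIntegral.norm_integral_le_of_norm_le_const
    (C := ‖w‖ * Real.exp ‖w‖) (f := fun s : ℝ => Complex.exp (s * w) * w)
    (a := 0) (b := 1) ?_
  · simpa using this
  · intro s hs
    rw [Set.uIoc_of_le zero_le_one] at hs
    rw [norm_mul, Complex.norm_exp]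
    have h3 : ((s : ℂ) * w).re = s * w.re := by simp
    rw [h3, mul_comm (‖w‖)]
    gcongr
    calc s * w.re ≤ s * ‖w‖ := by
          have : w.re ≤ ‖w‖ := Complex.re_le_norm w
          exact mul_le_mul_of_nonneg_left this hs.1.le
      _ ≤ 1 * ‖w‖ := by gcongr; exact hs.2
      _ = ‖w‖ := one_mul _

lemma aux_integrable_cexp {w : ℂ} (hw : w.re < 0) :
    IntegrableOn (fun x : ℝ => Complex.exp (w * x)) (Set.Ioi 0) := by
  have hb : (0:ℝ) < -w.re := by linarith
  refine (Integrable.mono' (exp_neg_integrableOn_Ioi 0 hb) ?_ ?_)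
  · exact (Continuous.aestronglyMeasurable (by fun_prop)).restrict
  · filter_upwards with x
    rw [Complex.norm_exp]
    simp only [neg_mul, neg_neg]
    rw [Complex.mul_re]
    simp

lemma aux_integral_cexp {w : ℂ} (hw : w.re < 0) :
    ∫ x in Set.Ioi (0:ℝ), Complex.exp (w * x) = -w⁻¹ := by
  have hw0 : w ≠ 0 := fun h => by simp [h] at hw
  have hder : ∀ x ∈ Set.Ici (0:ℝ),
      HasDerivAt (fun x : ℝ => w⁻¹ * Complex.exp (w * x)) (Complex.exp (w * x)) x := by
    intro x _
    have h1 : HasDerivAt (fun y : ℂ => w⁻¹ * Complex.exp (w * y))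
        (w⁻¹ * (Complex.exp (w * x) * w)) (x : ℂ) := by
      exact (((Complex.hasDerivAt_exp ((w) * x)).comp (x:ℂ)
        (by simpa using (hasDerivAt_id ((x:ℂ))).const_mul w)).const_mul w⁻¹)
    have h2 := h1.comp_ofReal
    have : w⁻¹ * (Complex.exp (w * x) * w) = Complex.exp (w * x) := by
      field_simp
    rwa [this] at h2
  have htend : Tendsto (fun x : ℝ => w⁻¹ * Complex.exp (w * x)) atTop (nhds 0) := by
    rw [show (0:ℂ) = w⁻¹ * 0 by ring]
    apply Tendsto.const_mul
    rw [tendsto_zero_iff_norm_tendsto_zero]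
    have : ∀ x : ℝ, ‖Complex.exp (w * x)‖ = Real.exp (-((-w.re) * x)) := by
      intro x
      rw [Complex.norm_exp, Complex.mul_re]
      simp
    simp_rw [this]
    exact (Real.tendsto_exp_neg_atTop_nhds_zero).comp
      (Tendsto.const_mul_atTop (by linarith) tendsto_id)
  have := integral_Ioi_of_hasDerivAt_of_tendsto' hder (aux_integrable_cexp hw) htend
  rw [this]; simp

lemma aux_log_div {u : ℝ} (hu : 0 < u) {z : ℂ} (hz : z.re < u) :
    Complex.log ((u:ℂ) / ((u:ℂ) - z)) = Complex.log (u:ℂ) - Complex.log ((u:ℂ) - z) := by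
  set b : ℂ := (u:ℂ) - z with hb
  have hbre : 0 < b.re := by simp [hb]; linarith
  have hbne : b ≠ 0 := fun h => by rw [h] at hbre; simp at hbre
  have hune : (u:ℂ) ≠ 0 := by exact_mod_cast hu.ne'
  set w : ℂ := Complex.log (u:ℂ) - Complex.log b with hw
  have hexp : Complex.exp w = (u:ℂ) / b := by
    rw [hw, Complex.exp_sub, Complex.exp_log hune, Complex.exp_log hbne]
  have him : w.im = -Complex.arg b := by
    rw [hw]
    simp only [Complex.sub_im, Complex.log_im]
    rw [Complex.arg_ofReal_of_nonneg hu.le]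
    ring
  have harg : |Complex.arg b| < Real.pi / 2 :=
    Complex.abs_arg_lt_pi_div_two_iff.2 (Or.inl hbre)
  have hpi : (0:ℝ) < Real.pi / 2 := by positivity
  rw [← hexp, Complex.log_exp (by rw [him]; cases abs_lt.1 harg; linarith [Real.pi_pos])
    (by rw [him]; cases abs_lt.1 harg; linarith [Real.pi_pos])]

lemma aux_frullani {u : ℝ} (hu : 0 < u) {z : ℂ} (hz : z.re < u) :
    IntegrableOn (fun x : ℝ => (Complex.exp (z * x) - 1) * (1 / (x:ℂ)) *
      ((Real.exp (-u * x) : ℝ) : ℂ)) (Set.Ioi 0) ∧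
    (∫ x in Set.Ioi (0:ℝ), (Complex.exp (z * x) - 1) * (1 / (x:ℂ)) *
      ((Real.exp (-u * x) : ℝ) : ℂ)) = Complex.log ((u:ℂ) / ((u:ℂ) - z)) := by
  set m := max z.re 0 with hm
  have hmu : m < u := max_lt hz hu
  set f : ℝ → ℝ → ℂ := fun t x => z * Complex.exp (((t:ℂ) * z - (u:ℂ)) * (x:ℂ)) with hf
  have htz : ∀ t ∈ Set.Icc (0:ℝ) 1, t * z.re ≤ m := by
    intro t ht
    rcases le_total z.re 0 with h | h
    · exact le_trans (mul_nonpos_of_nonneg_of_nonpos ht.1 h) (le_max_right _ _)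
    · exact le_trans (mul_le_of_le_one_left h ht.2) (le_max_left _ _)
  have hre : ∀ (t x : ℝ), (((t:ℂ) * z - (u:ℂ)) * (x:ℂ)).re = (t * z.re - u) * x := by
    intro t x
    simp [Complex.mul_re, Complex.sub_re, Complex.sub_im, Complex.mul_im]
  have hnorm : ∀ (t x : ℝ), ‖f t x‖ = ‖z‖ * Real.exp ((t * z.re - u) * x) := by
    intro t x
    rw [hf]
    simp only [norm_mul, Complex.norm_exp, hre]
  -- product integrability
  have hae : ∀ᵐ p ∂((MeasureTheory.volume.restrict (Set.Ioc (0:ℝ) 1)).prod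
      (MeasureTheory.volume.restrict (Set.Ioi (0:ℝ)))),
      p ∈ Set.Ioc (0:ℝ) 1 ×ˢ Set.Ioi (0:ℝ) := by
    rw [Measure.prod_restrict]
    exact ae_restrict_mem (measurableSet_Ioc.prod measurableSet_Ioi)
  have hgint : Integrable (fun p : ℝ × ℝ => ‖z‖ * Real.exp (-(u - m) * p.2))
      ((MeasureTheory.volume.restrict (Set.Ioc (0:ℝ) 1)).prod
        (MeasureTheory.volume.restrict (Set.Ioi (0:ℝ)))) := by
    exact Integrable.mul_prod
      ((integrableOn_const_iff (C := ‖z‖)).2 (Or.inr measure_Ioc_lt_top))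
      (exp_neg_integrableOn_Ioi 0 (by linarith))
  have hprod : Integrable (Function.uncurry f)
      ((MeasureTheory.volume.restrict (Set.Ioc (0:ℝ) 1)).prod
        (MeasureTheory.volume.restrict (Set.Ioi (0:ℝ)))) := by
    refine hgint.mono' (Continuous.aestronglyMeasurable (by fun_prop)) ?_
    filter_upwards [hae] with p hp
    obtain ⟨hp1, hp2⟩ := hp
    have h1 : p.1 * z.re ≤ m := htz p.1 ⟨hp1.1.le, hp1.2⟩
    have h2 : (0:ℝ) < p.2 := hp2
    calc ‖Function.uncurry f p‖ = ‖z‖ * Real.exp ((p.1 * z.re - u) * p.2) := hnorm p.1 p.2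
      _ ≤ ‖z‖ * Real.exp (-(u - m) * p.2) := by
          gcongr
          nlinarith
  -- pointwise in x : target = inner t integral
  have hx_eq : ∀ x ∈ Set.Ioi (0:ℝ),
      (Complex.exp (z * x) - 1) * (1 / (x:ℂ)) * ((Real.exp (-u * x) : ℝ) : ℂ)
        = ∫ t in Set.Ioc (0:ℝ) 1, f t x := by
    intro x hx
    have hxne : (x:ℂ) ≠ 0 := by exact_mod_cast (ne_of_gt hx)
    have hder : ∀ t ∈ Set.uIcc (0:ℝ) 1,
        HasDerivAt (fun t : ℝ => ((x:ℂ))⁻¹ * Complex.exp (((t:ℂ) * z - (u:ℂ)) * (x:ℂ)))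
          (f t x) t := by
      intro t _
      have h1 : HasDerivAt (fun y : ℂ => ((x:ℂ))⁻¹ * Complex.exp ((y * z - (u:ℂ)) * (x:ℂ)))
          (((x:ℂ))⁻¹ * (Complex.exp (((t:ℂ) * z - (u:ℂ)) * (x:ℂ)) * (z * (x:ℂ)))) ((t:ℂ)) := by
        have hin : HasDerivAt (fun y : ℂ => (y * z - (u:ℂ)) * (x:ℂ)) (z * (x:ℂ)) ((t:ℂ)) := by
          simpa using (((hasDerivAt_id ((t:ℂ))).mul_const z).sub_const ((u:ℂ))).mul_const ((x:ℂ))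
        exact ((Complex.hasDerivAt_exp _).comp _ hin).const_mul _
      have h2 := h1.comp_ofReal
      have h3 : ((x:ℂ))⁻¹ * (Complex.exp (((t:ℂ) * z - (u:ℂ)) * (x:ℂ)) * (z * (x:ℂ))) = f t x := by
        rw [hf]; field_simp
      rwa [h3] at h2
    have hint : IntervalIntegrable (fun t => f t x) MeasureTheory.volume 0 1 :=
      (Continuous.intervalIntegrable (by fun_prop)) _ _
    have key := intervalIntegral.integral_eq_sub_of_hasDerivAt hder hint
    rw [intervalIntegral.integral_of_le zero_le_one] at key
    rw [key]
    rw [Complex.ofReal_exp]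
    push_cast
    rw [show ((1:ℂ) * z - (u:ℂ)) * (x:ℂ) = z * x + (-u * x) by ring,
      show ((0:ℂ) * z - (u:ℂ)) * (x:ℂ) = (-u * x : ℂ) by ring, Complex.exp_add]
    field_simp
  -- integrability of target
  have hInt : IntegrableOn (fun x : ℝ => (Complex.exp (z * x) - 1) * (1 / (x:ℂ)) *
      ((Real.exp (-u * x) : ℝ) : ℂ)) (Set.Ioi 0) := by
    refine (hprod.integral_prod_right).congr ?_
    filter_upwards [ae_restrict_mem measurableSet_Ioi] with x hx
    exact (hx_eq x hx).symm
  refine ⟨hInt, ?_⟩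
  -- swap and compute
  have hswap := integral_integral_swap hprod
  have hx_int : ∀ t ∈ Set.Ioc (0:ℝ) 1,
      (∫ x in Set.Ioi (0:ℝ), f t x) = z * (((u:ℂ) - (t:ℂ) * z)⁻¹) := by
    intro t ht
    have hwre : ((t:ℂ) * z - (u:ℂ)).re < 0 := by
      have := htz t ⟨ht.1.le, ht.2⟩
      simp only [Complex.sub_re, Complex.mul_re, Complex.ofReal_re, Complex.ofReal_im]
      nlinarith
    rw [hf]
    simp only
    rw [MeasureTheory.integral_const_mul, aux_integral_cexp hwre]
    rw [← inv_neg, neg_sub]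
  calc (∫ x in Set.Ioi (0:ℝ), (Complex.exp (z * x) - 1) * (1 / (x:ℂ)) *
        ((Real.exp (-u * x) : ℝ) : ℂ))
      = ∫ x in Set.Ioi (0:ℝ), ∫ t in Set.Ioc (0:ℝ) 1, f t x := by
        exact setIntegral_congr_fun measurableSet_Ioi hx_eq
    _ = ∫ t in Set.Ioc (0:ℝ) 1, ∫ x in Set.Ioi (0:ℝ), f t x := hswap.symm
    _ = ∫ t in Set.Ioc (0:ℝ) 1, z * (((u:ℂ) - (t:ℂ) * z)⁻¹) :=
        setIntegral_congr_fun measurableSet_Ioc hx_int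
    _ = Complex.log ((u:ℂ)) - Complex.log ((u:ℂ) - z) := by
        rw [← intervalIntegral.integral_of_le zero_le_one]
        have hden : ∀ t ∈ Set.uIcc (0:ℝ) 1, ((u:ℂ) - (t:ℂ) * z) ≠ 0 := by
          intro t ht
          rw [Set.uIcc_of_le zero_le_one] at ht
          intro h
          have : ((u:ℂ) - (t:ℂ) * z).re = 0 := by rw [h]; simp
          simp only [Complex.sub_re, Complex.mul_re, Complex.ofReal_re, Complex.ofReal_im] at this
          have := htz t ht
          nlinarith
        have hder : ∀ t ∈ Set.uIcc (0:ℝ) 1,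
            HasDerivAt (fun t : ℝ => -Complex.log ((u:ℂ) - (t:ℂ) * z))
              (z * (((u:ℂ) - (t:ℂ) * z)⁻¹)) t := by
          intro t ht
          rw [Set.uIcc_of_le zero_le_one] at ht
          have hin : HasDerivAt (fun t : ℝ => (u:ℂ) - (t:ℂ) * z) (-z) t := by
            have : HasDerivAt (fun y : ℂ => (u:ℂ) - y * z) (-z) ((t:ℂ)) := by
              simpa using ((hasDerivAt_id ((t:ℂ))).mul_const z).const_sub ((u:ℂ))
            exact this.comp_ofReal
          have hslit : ((u:ℂ) - (t:ℂ) * z) ∈ Complex.slitPlane := by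
            refine Complex.mem_slitPlane_iff.2 (Or.inl ?_)
            have := htz t ht
            simp only [Complex.sub_re, Complex.mul_re, Complex.ofReal_re, Complex.ofReal_im]
            nlinarith
          have := (hin.clog_real hslit).neg
          rwa [show -(-z / ((u:ℂ) - (t:ℂ) * z)) = z * (((u:ℂ) - (t:ℂ) * z)⁻¹) by
            rw [neg_div, neg_neg, div_eq_mul_inv]] at this
        have hcont : IntervalIntegrable (fun t : ℝ => z * (((u:ℂ) - (t:ℂ) * z)⁻¹))
            MeasureTheory.volume 0 1 := by
          apply ContinuousOn.intervalIntegrable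
          apply ContinuousOn.mul continuousOn_const
          exact ContinuousOn.inv₀ (Continuous.continuousOn (by fun_prop)) hden
        rw [intervalIntegral.integral_eq_sub_of_hasDerivAt hder hcont]
        push_cast
        ring
    _ = Complex.log ((u:ℂ) / ((u:ℂ) - z)) := (aux_log_div hu hz).symm

lemma aux_measure (R : ℝ) (hR : 0 < R) (ν : Measure ℝ) [IsFiniteMeasure ν]
    (hsupp : ν (Set.Iio R) = 0) (z : ℂ) (hz : z.re < R) :
    Integrable (fun u : ℝ => Complex.log ((u : ℂ) / ((u : ℂ) - z))) ν ∧
    IntegrableOn (fun x : ℝ => (Complex.exp (z * x) - 1) * (1 / (x : ℂ)) *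
      (((∫ u : ℝ, Real.exp (-u * x) ∂ν : ℝ)) : ℂ)) (Set.Ioi 0) ∧
    (∫ u : ℝ, Complex.log ((u : ℂ) / ((u : ℂ) - z)) ∂ν) =
      ∫ x in Set.Ioi (0:ℝ), (Complex.exp (z * x) - 1) * (1 / (x : ℂ)) *
        (((∫ u : ℝ, Real.exp (-u * x) ∂ν : ℝ)) : ℂ) := by
  have hae : ∀ᵐ u ∂ν, R ≤ u := by
    have hset : {a : ℝ | ¬ R ≤ a} = Set.Iio R := by ext a; simp [not_le]
    rw [ae_iff, hset]; exact hsupp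
  set F : ℝ → ℝ → ℂ := fun x u' => (Complex.exp (z * x) - 1) * (1 / (x : ℂ)) *
    ((Real.exp (-u' * x) : ℝ) : ℂ) with hF
  set μx := MeasureTheory.volume.restrict (Set.Ioi (0:ℝ)) with hμx
  set D : ℝ → ℝ := fun x => ‖z‖ * Real.exp ‖z‖ * Real.exp (-R * x) +
    (Real.exp (-(R - z.re) * x) + Real.exp (-R * x)) with hD
  have hDint : IntegrableOn D (Set.Ioi (0:ℝ)) := by
    apply Integrable.add
    · exact (exp_neg_integrableOn_Ioi 0 hR).const_mul _
    · exact (exp_neg_integrableOn_Ioi 0 (by linarith)).add (exp_neg_integrableOn_Ioi 0 hR)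
  have hae1 : ∀ᵐ p ∂(μx.prod ν), 0 < p.1 := by
    rw [ae_iff]
    refine measure_mono_null (fun p hp => ?_) (?_ : (μx.prod ν) ((Set.Ioi (0:ℝ))ᶜ ×ˢ Set.univ) = 0)
    · simp only [Set.mem_setOf_eq, not_lt] at hp
      exact ⟨by simpa using hp, Set.mem_univ _⟩
    · rw [Measure.prod_prod, hμx, Measure.restrict_apply measurableSet_Ioi.compl,
        Set.compl_inter_self]
      simp
  have hae2 : ∀ᵐ p ∂(μx.prod ν), R ≤ p.2 := by
    rw [ae_iff]
    refine measure_mono_null (fun p hp => ?_) (?_ : (μx.prod ν) (Set.univ ×ˢ Set.Iio R) = 0)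
    · simp only [Set.mem_setOf_eq, not_le] at hp
      exact ⟨Set.mem_univ _, hp⟩
    · rw [Measure.prod_prod, hsupp, mul_zero]
  have hprod : Integrable (Function.uncurry F) (μx.prod ν) := by
    refine Integrable.mono' (g := fun p : ℝ × ℝ => D p.1 * 1) ?_ ?_ ?_
    · exact Integrable.mul_prod hDint (integrable_const 1)
    · apply Measurable.aestronglyMeasurable
      apply Measurable.mul
      apply Measurable.mul
      · fun_prop
      · exact (Complex.measurable_ofReal.comp measurable_fst).inv.const_mul 1
      · fun_prop
    · filter_upwards [hae1, hae2] with p hp1 hp2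
      have hxpos : (0:ℝ) < p.1 := hp1
      have hxne : (p.1 : ℂ) ≠ 0 := by exact_mod_cast hxpos.ne'
      have hnorm : ‖Function.uncurry F p‖ =
          ‖Complex.exp (z * p.1) - 1‖ * (1 / p.1) * Real.exp (-p.2 * p.1) := by
        simp only [Function.uncurry, hF, norm_mul]
        congr 1
        · congr 1
          rw [norm_div, norm_one, Complex.norm_real, Real.norm_eq_abs, abs_of_pos hxpos]
        · rw [Complex.norm_real, Real.norm_eq_abs, abs_of_pos (Real.exp_pos _)]
      have hexple : Real.exp (-p.2 * p.1) ≤ Real.exp (-R * p.1) := by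
        apply Real.exp_le_exp.2
        nlinarith
      rw [hnorm, mul_one]
      rcases le_total p.1 1 with hx1 | hx1
      · have h1 : ‖Complex.exp (z * p.1) - 1‖ ≤ ‖z‖ * p.1 * Real.exp ‖z‖ := by
          calc ‖Complex.exp (z * p.1) - 1‖ ≤ ‖z * (p.1:ℂ)‖ * Real.exp ‖z * (p.1:ℂ)‖ :=
                aux_norm_cexp_sub_one_le _
            _ = ‖z‖ * p.1 * Real.exp (‖z‖ * p.1) := by
                rw [norm_mul, Complex.norm_real, Real.norm_eq_abs, abs_of_pos hxpos]
            _ ≤ ‖z‖ * p.1 * Real.exp ‖z‖ := by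
                gcongr
                nlinarith [norm_nonneg z]
        calc ‖Complex.exp (z * p.1) - 1‖ * (1 / p.1) * Real.exp (-p.2 * p.1)
            ≤ (‖z‖ * p.1 * Real.exp ‖z‖) * (1 / p.1) * Real.exp (-R * p.1) := by
              gcongr
          _ = ‖z‖ * Real.exp ‖z‖ * Real.exp (-R * p.1) := by
              field_simp
          _ ≤ D p.1 := by
              simp only [hD]
              nlinarith [Real.exp_pos (-(R - z.re) * p.1), Real.exp_pos (-R * p.1)]
      · have h1 : ‖Complex.exp (z * p.1) - 1‖ ≤ Real.exp (z.re * p.1) + 1 := by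
          calc ‖Complex.exp (z * p.1) - 1‖ ≤ ‖Complex.exp (z * p.1)‖ + ‖(1:ℂ)‖ :=
                norm_sub_le _ _
            _ = Real.exp (z.re * p.1) + 1 := by
                rw [Complex.norm_exp, norm_one]
                congr 2
                simp [Complex.mul_re]
        have h2 : (1:ℝ) / p.1 ≤ 1 := by
          rw [div_le_one hxpos]; exact hx1
        calc ‖Complex.exp (z * p.1) - 1‖ * (1 / p.1) * Real.exp (-p.2 * p.1)
            ≤ (Real.exp (z.re * p.1) + 1) * 1 * Real.exp (-R * p.1) := by
              gcongr
          _ = Real.exp (-(R - z.re) * p.1) + Real.exp (-R * p.1) := by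
              rw [mul_one, add_mul, one_mul, ← Real.exp_add]
              ring_nf
          _ ≤ D p.1 := by
              simp only [hD]
              nlinarith [mul_nonneg (mul_nonneg (norm_nonneg z) (Real.exp_pos ‖z‖).le)
                (Real.exp_pos (-R * p.1)).le]
  -- a.e. congruence over ν
  have heq : ∀ᵐ u' ∂ν, (∫ x, F x u' ∂μx) = Complex.log ((u' : ℂ) / ((u' : ℂ) - z)) := by
    filter_upwards [hae] with u' hu'
    have hu0 : (0:ℝ) < u' := lt_of_lt_of_le hR hu'
    have hzu : z.re < u' := lt_of_lt_of_le hz hu'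
    exact (aux_frullani hu0 hzu).2
  have h1 : Integrable (fun u' => ∫ x, F x u' ∂μx) ν := by
    have := hprod.integral_prod_right
    exact this
  have hlogint : Integrable (fun u : ℝ => Complex.log ((u : ℂ) / ((u : ℂ) - z))) ν :=
    h1.congr heq
  have h2 : Integrable (fun x => ∫ u', F x u' ∂ν) μx := hprod.integral_prod_left
  have hswap : (∫ x, ∫ u', F x u' ∂ν ∂μx) = ∫ u', ∫ x, F x u' ∂μx ∂ν :=
    integral_integral_swap hprod
  -- inner u' integral
  have hexp_int : ∀ x : ℝ, 0 < x → Integrable (fun u' : ℝ => Real.exp (-u' * x)) ν := by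
    intro x hx
    refine Integrable.mono' (integrable_const (Real.exp (-R * x)))
      (Continuous.aestronglyMeasurable (by fun_prop)) ?_
    filter_upwards [hae] with u' hu'
    rw [Real.norm_eq_abs, abs_of_pos (Real.exp_pos _)]
    apply Real.exp_le_exp.2
    nlinarith
  have hinner : ∀ x ∈ Set.Ioi (0:ℝ), (∫ u', F x u' ∂ν) =
      (Complex.exp (z * x) - 1) * (1 / (x : ℂ)) *
        (((∫ u : ℝ, Real.exp (-u * x) ∂ν : ℝ)) : ℂ) := by
    intro x hx
    calc (∫ u', F x u' ∂ν)
        = (Complex.exp (z * x) - 1) * (1 / (x : ℂ)) *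
            ∫ u', ((Real.exp (-u' * x) : ℝ) : ℂ) ∂ν := integral_const_mul _ _
      _ = (Complex.exp (z * x) - 1) * (1 / (x : ℂ)) *
            (((∫ u : ℝ, Real.exp (-u * x) ∂ν : ℝ)) : ℂ) := by
            congr 1
            exact integral_ofReal (𝕜 := ℂ)
  refine ⟨hlogint, ?_, ?_⟩
  · refine h2.congr ?_
    rw [hμx]
    filter_upwards [ae_restrict_mem measurableSet_Ioi] with x hx
    exact hinner x hx
  · calc (∫ u : ℝ, Complex.log ((u : ℂ) / ((u : ℂ) - z)) ∂ν)
        = ∫ u', ∫ x, F x u' ∂μx ∂ν := (integral_congr_ae heq).symm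
      _ = ∫ x, ∫ u', F x u' ∂ν ∂μx := hswap.symm
      _ = ∫ x in Set.Ioi (0:ℝ), (Complex.exp (z * x) - 1) * (1 / (x : ℂ)) *
            (((∫ u : ℝ, Real.exp (-u * x) ∂ν : ℝ)) : ℂ) := by
          rw [hμx]
          exact setIntegral_congr_fun measurableSet_Ioi hinner

/-- For a finite signed measure τ = τp − τm supported in [R, ∞) and
Re(z) < R, the GGC-like representation agrees with the Lévy–Khintchine representation:
∫ log(u/(u−z)) dτ(u) = ∫₀^∞ (e^{zx} − 1)·(1/x)·(∫ e^{−ux} dτ(u)) dx, both sides finite. -/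
theorem ggc_like_equals_levy_khintchine
    (R : ℝ) (hR : 0 < R) (τp τm : Measure ℝ)
    [IsFiniteMeasure τp] [IsFiniteMeasure τm]
    (hsuppp : τp (Set.Iio R) = 0) (hsuppm : τm (Set.Iio R) = 0)
    (z : ℂ) (hz : z.re < R) :
    Integrable (fun u : ℝ => Complex.log ((u : ℂ) / ((u : ℂ) - z))) τp ∧
    Integrable (fun u : ℝ => Complex.log ((u : ℂ) / ((u : ℂ) - z))) τm ∧
    IntegrableOn
      (fun x : ℝ => (Complex.exp (z * x) - 1) * (1 / (x : ℂ)) *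
        ((((∫ u : ℝ, Real.exp (-u * x) ∂τp) - (∫ u : ℝ, Real.exp (-u * x) ∂τm) : ℝ)) : ℂ))
      (Set.Ioi 0) ∧
    (∫ u : ℝ, Complex.log ((u : ℂ) / ((u : ℂ) - z)) ∂τp) -
      (∫ u : ℝ, Complex.log ((u : ℂ) / ((u : ℂ) - z)) ∂τm) =
      ∫ x in Set.Ioi (0 : ℝ), (Complex.exp (z * x) - 1) * (1 / (x : ℂ)) *
        ((((∫ u : ℝ, Real.exp (-u * x) ∂τp) - (∫ u : ℝ, Real.exp (-u * x) ∂τm) : ℝ)) : ℂ) := by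
  obtain ⟨hp1, hp2, hp3⟩ := aux_measure R hR τp hsuppp z hz
  obtain ⟨hm1, hm2, hm3⟩ := aux_measure R hR τm hsuppm z hz
  have hkey : ∀ x : ℝ,
      (Complex.exp (z * x) - 1) * (1 / (x : ℂ)) *
        ((((∫ u : ℝ, Real.exp (-u * x) ∂τp) - (∫ u : ℝ, Real.exp (-u * x) ∂τm) : ℝ)) : ℂ)
      = (Complex.exp (z * x) - 1) * (1 / (x : ℂ)) *
          (((∫ u : ℝ, Real.exp (-u * x) ∂τp : ℝ)) : ℂ)
        - (Complex.exp (z * x) - 1) * (1 / (x : ℂ)) *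
          (((∫ u : ℝ, Real.exp (-u * x) ∂τm : ℝ)) : ℂ) := by
    intro x
    push_cast
    ring
  have hIntCombined : IntegrableOn
      (fun x : ℝ => (Complex.exp (z * x) - 1) * (1 / (x : ℂ)) *
        ((((∫ u : ℝ, Real.exp (-u * x) ∂τp) - (∫ u : ℝ, Real.exp (-u * x) ∂τm) : ℝ)) : ℂ))
      (Set.Ioi 0) := by
    refine (hp2.sub hm2).congr ?_
    exact Filter.Eventually.of_forall fun x => (hkey x).symm
  refine ⟨hp1, hm1, hIntCombined, ?_⟩
  rw [hp3, hm3, ← integral_sub hp2 hm2]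
  refine integral_congr_ae (Filter.Eventually.of_forall fun x => (hkey x).symm)
end

section
/- lim_{y → 0⁺} (1/π) ∫_a^b ( ∫_{(0,∞)} y/((u − x)² + y²) dτ(u) ) dx = τ((a, b)). (Stieltjes–Perron inversion for a finite signed measure: the limit of the integrated imaginary part of the Cauchy–Stieltjes transform over (a, b) recovers the measure of the open interval.) -/
/-!
Integrating the Poisson kernel `y / ((u - x) ^ 2 + y ^ 2)` in `x` over `[a, b]` gives
`arctan ((b - u) / y) - arctan ((a - u) / y)`, which is bounded by `π` and tends, as `y → 0⁺`,
to `π` on `(a, b)`, to `π / 2` at the endpoints and to `0` elsewhere. By Fubini and dominated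
convergence, for a finite measure `μ` the integrated transform tends to
`π μ (a, b) + π / 2 (μ {a} + μ {b})`; the endpoint atoms cancel in the difference `τp - τm`.
-/

open MeasureTheory Real Filter Set Topology

lemma integral_div_sub_sq_add_sq (y u a b : ℝ) :
    ∫ x in a..b, y / ((u - x) ^ 2 + y ^ 2) = arctan ((b - u) / y) - arctan ((a - u) / y) := by
  have hshift : ∀ x, y / ((u - x) ^ 2 + y ^ 2) = y / (y ^ 2 + (x - u) ^ 2) := fun x => by ring
  simp_rw [hshift]
  rw [intervalIntegral.integral_comp_sub_right (fun x => y / (y ^ 2 + x ^ 2)),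
    integral_div_sq_add_sq]

lemma div_sq_add_sq_le_inv {y : ℝ} (hy : 0 < y) (t : ℝ) : y / (t ^ 2 + y ^ 2) ≤ 1 / y := by
  rw [div_le_div_iff₀ (by positivity) hy]
  nlinarith [sq_nonneg t]

lemma integrable_div_sq_add_sq_prod {y : ℝ} (hy : 0 < y) (ν μ : Measure ℝ) [IsFiniteMeasure ν]
    [IsFiniteMeasure μ] :
    Integrable (fun p : ℝ × ℝ => y / ((p.2 - p.1) ^ 2 + y ^ 2)) (ν.prod μ) := by
  refine Integrable.mono' (integrable_const (1 / y)) ?_ (Eventually.of_forall fun p => ?_)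
  · exact (continuous_const.div (by fun_prop) fun p => by positivity).aestronglyMeasurable
  · rw [Real.norm_of_nonneg (by positivity)]
    exact div_sq_add_sq_le_inv hy _

lemma intervalIntegrable_integral_div_sq_add_sq {y : ℝ} (hy : 0 < y) (μ : Measure ℝ)
    [IsFiniteMeasure μ] (a b : ℝ) :
    IntervalIntegrable (fun x => ∫ u, y / ((u - x) ^ 2 + y ^ 2) ∂μ) volume a b :=
  ⟨(integrable_div_sq_add_sq_prod hy _ μ).integral_prod_left,
    (integrable_div_sq_add_sq_prod hy _ μ).integral_prod_left⟩

lemma intervalIntegral_integral_div_sq_add_sq {y : ℝ} (hy : 0 < y) (μ : Measure ℝ)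
    [IsFiniteMeasure μ] {a b : ℝ} (hab : a ≤ b) :
    ∫ x in a..b, ∫ u, y / ((u - x) ^ 2 + y ^ 2) ∂μ =
      ∫ u, arctan ((b - u) / y) - arctan ((a - u) / y) ∂μ := by
  rw [intervalIntegral.integral_of_le hab,
    integral_integral_swap (integrable_div_sq_add_sq_prod hy _ μ)]
  refine integral_congr_ae (Eventually.of_forall fun u => ?_)
  simp only [← intervalIntegral.integral_of_le hab, integral_div_sub_sq_add_sq]

lemma tendsto_arctan_div_nhdsGT_zero (c : ℝ) :
    Tendsto (fun y => arctan (c / y)) (𝓝[>] 0) (𝓝 (π / 2 * SignType.sign c)) := by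
  rcases lt_trichotomy c 0 with hc | rfl | hc
  · simpa [hc, div_eq_mul_inv, Function.comp_def] using
      (tendsto_arctan_atBot.mono_right nhdsWithin_le_nhds).comp
        (tendsto_inv_nhdsGT_zero.const_mul_atTop_of_neg hc)
  · simp
  · simpa [hc, div_eq_mul_inv, Function.comp_def] using
      (tendsto_arctan_atTop.mono_right nhdsWithin_le_nhds).comp
        (tendsto_inv_nhdsGT_zero.const_mul_atTop hc)

lemma tendsto_arctan_sub_arctan_div {a b : ℝ} (hab : a < b) (u : ℝ) :
    Tendsto (fun y => arctan ((b - u) / y) - arctan ((a - u) / y)) (𝓝[>] 0)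
      (𝓝 (π / 2 * ((Icc a b).indicator 1 u + (Ioo a b).indicator 1 u))) := by
  convert (tendsto_arctan_div_nhdsGT_zero _).sub (tendsto_arctan_div_nhdsGT_zero _) using 2
  rw [← mul_sub]
  congr 1
  rcases lt_trichotomy u a with hua | rfl | hua
  · simp [indicator, hua.not_ge, hua, hua.le, hua.trans hab]
  · simp [indicator, hab, hab.le]
  rcases lt_trichotomy u b with hub | rfl | hub
  · simp [indicator, hua, hub, hua.le, hub.le]
  · simp [indicator, hab, hab.le]
  · simp [indicator, hub.not_ge, hub, hub.le, hab.trans hub]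

lemma abs_arctan_sub_arctan_le (s t : ℝ) : |arctan s - arctan t| ≤ π := by
  rw [abs_le]
  constructor <;> linarith [arctan_lt_pi_div_two s, neg_pi_div_two_lt_arctan s,
    arctan_lt_pi_div_two t, neg_pi_div_two_lt_arctan t]

lemma tendsto_integral_arctan_sub_arctan_div (μ : Measure ℝ) [IsFiniteMeasure μ] {a b : ℝ}
    (hab : a < b) :
    Tendsto (fun y => ∫ u, arctan ((b - u) / y) - arctan ((a - u) / y) ∂μ) (𝓝[>] 0)
      (𝓝 (π / 2 * (μ.real (Icc a b) + μ.real (Ioo a b)))) := by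
  have hlimit : ∫ u, π / 2 * ((Icc a b).indicator 1 u + (Ioo a b).indicator 1 u) ∂μ =
      π / 2 * (μ.real (Icc a b) + μ.real (Ioo a b)) := by
    rw [integral_const_mul, integral_add ((integrable_const 1).indicator measurableSet_Icc)
      ((integrable_const 1).indicator measurableSet_Ioo), integral_indicator_one measurableSet_Icc,
      integral_indicator_one measurableSet_Ioo]
  rw [← hlimit]
  refine tendsto_integral_filter_of_dominated_convergence (fun _ => π)
    (Eventually.of_forall fun y => (by fun_prop : Continuous _).aestronglyMeasurable)
    (Eventually.of_forall fun y => Eventually.of_forall fun u => abs_arctan_sub_arctan_le _ _)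
    (integrable_const π) (Eventually.of_forall (tendsto_arctan_sub_arctan_div hab))

lemma tendsto_intervalIntegral_integral_div_sq_add_sq (μ : Measure ℝ) [IsFiniteMeasure μ]
    {a b : ℝ} (hab : a < b) :
    Tendsto (fun y => ∫ x in a..b, ∫ u, y / ((u - x) ^ 2 + y ^ 2) ∂μ) (𝓝[>] 0)
      (𝓝 (π / 2 * (μ.real (Icc a b) + μ.real (Ioo a b)))) := by
  refine (tendsto_integral_arctan_sub_arctan_div μ hab).congr' ?_
  filter_upwards [self_mem_nhdsWithin] with y hy
  exact (intervalIntegral_integral_div_sq_add_sq hy μ hab.le).symm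

lemma measureReal_Icc_eq (μ : Measure ℝ) [IsFiniteMeasure μ] {a b : ℝ} (hab : a < b) :
    μ.real (Icc a b) = μ.real (Ioo a b) + μ.real {a} + μ.real {b} := by
  rw [← Ico_union_right hab.le, ← Ioo_union_left hab,
    measureReal_union (by simp [hab.ne']) (measurableSet_singleton b),
    measureReal_union (by simp) (measurableSet_singleton a)]

theorem stieltjes_perron_inversion_signed_general
    (τp τm : Measure ℝ) [IsFiniteMeasure τp] [IsFiniteMeasure τm]
    (a b : ℝ) (hab : a < b)
    (hat : τp {a} = τm {a}) (hbt : τp {b} = τm {b}) :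
    Filter.Tendsto
      (fun y : ℝ =>
        (1 / Real.pi) *
          ∫ x in a..b,
            ((∫ u : ℝ, y / ((u - x) ^ 2 + y ^ 2) ∂τp) -
              (∫ u : ℝ, y / ((u - x) ^ 2 + y ^ 2) ∂τm)))
      (nhdsWithin 0 (Set.Ioi 0))
      (nhds ((τp (Set.Ioo a b)).toReal - (τm (Set.Ioo a b)).toReal)) := by
  have hlimit : (τp (Ioo a b)).toReal - (τm (Ioo a b)).toReal =
      1 / π * (π / 2 * (τp.real (Icc a b) + τp.real (Ioo a b)) -
        π / 2 * (τm.real (Icc a b) + τm.real (Ioo a b))) := by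
    simp only [measureReal_Icc_eq _ hab, measureReal_def, hat, hbt]
    field_simp
    ring
  rw [hlimit]
  refine (((tendsto_intervalIntegral_integral_div_sq_add_sq τp hab).sub
    (tendsto_intervalIntegral_integral_div_sq_add_sq τm hab)).const_mul (1 / π)).congr' ?_
  filter_upwards [self_mem_nhdsWithin] with y hy
  rw [intervalIntegral.integral_sub (intervalIntegrable_integral_div_sq_add_sq hy τp a b)
    (intervalIntegrable_integral_div_sq_add_sq hy τm a b)]

/-- Stieltjes–Perron inversion for a finite signed measure τ = τp − τm on
(0, ∞): if τ({a}) = τ({b}) = 0 for 0 < a < b, then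
lim_{y→0⁺} (1/π) ∫_a^b ∫ y/((u−x)² + y²) dτ(u) dx = τ((a, b)). -/
theorem stieltjes_perron_inversion_signed
    (τp τm : Measure ℝ) [IsFiniteMeasure τp] [IsFiniteMeasure τm]
    (hτp : τp (Set.Iic 0) = 0) (hτm : τm (Set.Iic 0) = 0)
    (a b : ℝ) (ha : 0 < a) (hab : a < b)
    (hat : τp {a} = τm {a}) (hbt : τp {b} = τm {b}) :
    Filter.Tendsto
      (fun y : ℝ =>
        (1 / Real.pi) *
          ∫ x in a..b,
            ((∫ u : ℝ, y / ((u - x) ^ 2 + y ^ 2) ∂τp) -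
              (∫ u : ℝ, y / ((u - x) ^ 2 + y ^ 2) ∂τm)))
      (nhdsWithin 0 (Set.Ioi 0))
      (nhds ((τp (Set.Ioo a b)).toReal - (τm (Set.Ioo a b)).toReal)) :=
  stieltjes_perron_inversion_signed_general τp τm a b hab hat hbt
end

section
/- Let C < 0 < R be real numbers and let D ∈ ℂ with Im(D) ≠ 0. Then the Euler substitution √((x − C)(x − R)) = x + t transforms the integral as follows: ∫_R^∞ dx / ( (x − D) √((x − C)(x − R)) ) = ∫_{−R}^{−(C+R)/2} 2 dt / ( t² + 2Dt + C(D − R) + DR ), where on the left the square root is the positive real square root and both integrals are complex-valued integrals over a real variable; in particular −R < −(C+R)/2 and the quadratic t² + 2Dt + C(D − R) + DR = (t − r⁺)(t − r⁻), with r^± := −D ± √((D − C)(D − R)), has no real roots, so the right-hand integrand is continuous on the interval of integration. -/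
open MeasureTheory Set

/-! The substitution `x = (CR - t²)/(2t + C + R)` inverts `t = √((x - C)(x - R)) - x`. It maps
`(-R, -(C+R)/2)` increasingly onto `(R, ∞)`, and along it `√((x - C)(x - R)) = x + t`, so the
change of variables turns the integrand into the rational function `2 / (t² + 2Dt + C(D - R) + DR)`.
That quadratic has the roots `-D ± √((D - C)(D - R))`; at a real root the imaginary part would force
`t = -(C+R)/2`, where the real part is `((C - R)/2)² ≠ 0`. -/

noncomputable section

def eulerQuadratic (C R : ℝ) (D t : ℂ) : ℂ :=
  t ^ 2 + 2 * D * t + C * (D - R) + D * R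

theorem eulerQuadratic_eq_mul_sub_mul_sub {C R : ℝ} {D w : ℂ} (hw : w ^ 2 = (D - C) * (D - R))
    (t : ℂ) : eulerQuadratic C R D t = (t - (-D + w)) * (t - (-D - w)) := by
  unfold eulerQuadratic
  linear_combination hw

theorem eulerQuadratic_ofReal_ne_zero {C R : ℝ} (hCR : C ≠ R) {D : ℂ} (hD : D.im ≠ 0) (t : ℝ) :
    eulerQuadratic C R D t ≠ 0 := by
  intro h
  have hre := congrArg Complex.re h
  have him := congrArg Complex.im h
  simp only [eulerQuadratic, pow_two, Complex.add_re, Complex.add_im, Complex.mul_re,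
    Complex.mul_im, Complex.sub_re, Complex.sub_im, Complex.ofReal_re, Complex.ofReal_im,
    Complex.re_ofNat, Complex.im_ofNat, Complex.zero_re, Complex.zero_im] at hre him
  have hmid : 2 * t + C + R = 0 :=
    (mul_eq_zero.mp (show D.im * (2 * t + C + R) = 0 by linarith)).resolve_left hD
  have hsq : (C - R) ^ 2 = 0 := by linear_combination 4 * hre - (4 * D.re + 2 * t - C - R) * hmid
  exact hCR (sub_eq_zero.mp (pow_eq_zero_iff two_ne_zero |>.mp hsq))

section EulerSubst

variable {C R t : ℝ}

def eulerSubst (C R t : ℝ) : ℝ := (C * R - t ^ 2) / (2 * t + C + R)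

def eulerSubstDeriv (C R t : ℝ) : ℝ := -2 * (t + C) * (t + R) / (2 * t + C + R) ^ 2

theorem bounds_of_mem_Ioo_neg_neg_add_div_two (ht : t ∈ Ioo (-R) (-(C + R) / 2)) :
    0 < t + R ∧ t + C < 0 ∧ 2 * t + C + R < 0 := by
  obtain ⟨h₁, h₂⟩ := ht
  refine ⟨?_, ?_, ?_⟩ <;> linarith

theorem eulerSubst_mul (hd : 2 * t + C + R ≠ 0) :
    eulerSubst C R t * (2 * t + C + R) = C * R - t ^ 2 :=
  div_mul_cancel₀ _ hd

theorem eulerSubst_add_self (hd : 2 * t + C + R ≠ 0) :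
    eulerSubst C R t + t = (t + C) * (t + R) / (2 * t + C + R) := by
  rw [eulerSubst, div_add' _ _ _ hd]
  ring

theorem eulerSubst_sub_mul_sub (hd : 2 * t + C + R ≠ 0) :
    (eulerSubst C R t - C) * (eulerSubst C R t - R) = (eulerSubst C R t + t) ^ 2 := by
  linear_combination -eulerSubst_mul hd

theorem hasDerivAt_eulerSubst (hd : 2 * t + C + R ≠ 0) :
    HasDerivAt (eulerSubst C R) (eulerSubstDeriv C R t) t := by
  have hnum : HasDerivAt (fun t : ℝ => C * R - t ^ 2) (-(2 * t)) t := by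
    simpa using (hasDerivAt_pow 2 t).const_sub (C * R)
  have hden : HasDerivAt (fun t : ℝ => 2 * t + C + R) 2 t := by
    simpa [add_assoc] using ((hasDerivAt_id t).const_mul 2).add_const (C + R)
  exact (hnum.div hden hd).congr_deriv (by unfold eulerSubstDeriv; ring)

theorem eulerSubstDeriv_pos (ht : t ∈ Ioo (-R) (-(C + R) / 2)) : 0 < eulerSubstDeriv C R t := by
  obtain ⟨htR, htC, hd⟩ := bounds_of_mem_Ioo_neg_neg_add_div_two ht
  exact div_pos (by nlinarith) (sq_pos_of_neg hd)

theorem sqrt_eulerSubst_sub_mul_sub (ht : t ∈ Ioo (-R) (-(C + R) / 2)) :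
    √((eulerSubst C R t - C) * (eulerSubst C R t - R)) = eulerSubst C R t + t := by
  obtain ⟨htR, htC, hd⟩ := bounds_of_mem_Ioo_neg_neg_add_div_two ht
  have hpos : 0 < eulerSubst C R t + t := by
    rw [eulerSubst_add_self hd.ne]
    exact div_pos_of_neg_of_neg (mul_neg_of_neg_of_pos htC htR) hd
  rw [eulerSubst_sub_mul_sub hd.ne, Real.sqrt_sq hpos.le]

theorem eulerSubst_injOn : InjOn (eulerSubst C R) (Ioo (-R) (-(C + R) / 2)) := by
  intro x hx y hy hxy
  obtain ⟨hxR, hxC, hdx⟩ := bounds_of_mem_Ioo_neg_neg_add_div_two hx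
  obtain ⟨hyR, hyC, hdy⟩ := bounds_of_mem_Ioo_neg_neg_add_div_two hy
  rw [eulerSubst, eulerSubst, div_eq_div_iff hdx.ne hdy.ne] at hxy
  have hfactor : (y - x) * ((x + C) * (y + R) + (x + R) * (y + C)) = 0 := by
    linear_combination hxy
  have hneg : (x + C) * (y + R) + (x + R) * (y + C) < 0 := by
    nlinarith [mul_neg_of_neg_of_pos hxC hyR, mul_neg_of_neg_of_pos hyC hxR]
  linarith [(mul_eq_zero.mp hfactor).resolve_right hneg.ne]

theorem sqrt_sub_self_mem_Ioo (hCR : C < R) {x : ℝ} (hx : R < x) :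
    √((x - C) * (x - R)) - x ∈ Ioo (-R) (-(C + R) / 2) := by
  have hprod : 0 < (x - C) * (x - R) := by nlinarith
  constructor
  · have : (x - R) ^ 2 < (x - C) * (x - R) := by nlinarith
    linarith [Real.lt_sqrt_of_sq_lt this]
  · have : (x - C) * (x - R) < ((2 * x - C - R) / 2) ^ 2 := by nlinarith
    linarith [Real.sqrt_lt_sqrt hprod.le this,
      Real.sqrt_sq (show 0 ≤ (2 * x - C - R) / 2 by linarith)]

theorem eulerSubst_sqrt_sub_self (hCR : C < R) {x : ℝ} (hx : R < x) :
    eulerSubst C R (√((x - C) * (x - R)) - x) = x := by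
  have hsq := Real.sq_sqrt (show 0 ≤ (x - C) * (x - R) by nlinarith)
  have hd := (bounds_of_mem_Ioo_neg_neg_add_div_two (sqrt_sub_self_mem_Ioo hCR hx)).2.2
  rw [eulerSubst, div_eq_iff hd.ne]
  linear_combination -hsq

theorem eulerSubst_image_Ioo (hCR : C < R) :
    eulerSubst C R '' Ioo (-R) (-(C + R) / 2) = Ioi R := by
  ext x
  constructor
  · rintro ⟨t, ht, rfl⟩
    obtain ⟨htR, -, hd⟩ := bounds_of_mem_Ioo_neg_neg_add_div_two ht
    have hsub : eulerSubst C R t - R = (t + R) ^ 2 / -(2 * t + C + R) := by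
      rw [eq_div_iff (neg_ne_zero.2 hd.ne)]
      linear_combination -eulerSubst_mul (C := C) (R := R) hd.ne
    exact sub_pos.mp (hsub ▸ div_pos (by positivity) (neg_pos.2 hd))
  · intro hx
    exact ⟨_, sqrt_sub_self_mem_Ioo hCR hx, eulerSubst_sqrt_sub_self hCR hx⟩

theorem integral_Ioi_eq_integral_eulerSubst {E : Type*} [NormedAddCommGroup E] [NormedSpace ℝ E]
    (hCR : C < R) (g : ℝ → E) :
    ∫ x in Ioi R, g x =
      ∫ t in Ioo (-R) (-(C + R) / 2), eulerSubstDeriv C R t • g (eulerSubst C R t) := by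
  rw [← eulerSubst_image_Ioo hCR, integral_image_eq_integral_abs_deriv_smul measurableSet_Ioo
    (fun t ht => (hasDerivAt_eulerSubst
      (bounds_of_mem_Ioo_neg_neg_add_div_two ht).2.2.ne).hasDerivWithinAt) eulerSubst_injOn]
  exact setIntegral_congr_fun measurableSet_Ioo fun t ht => by
    rw [abs_of_pos (eulerSubstDeriv_pos ht)]

theorem ofReal_eulerSubst_sub (D : ℂ) (hd : 2 * t + C + R ≠ 0) :
    (eulerSubst C R t : ℂ) - D = -eulerQuadratic C R D t / (2 * t + C + R) := by
  have hd' : (2 * t + C + R : ℂ) ≠ 0 := by exact_mod_cast hd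
  rw [eulerSubst, eq_div_iff hd', sub_mul]
  push_cast
  rw [div_mul_cancel₀ _ hd', eulerQuadratic]
  ring

theorem eulerSubstDeriv_smul_integrand {D : ℂ} (ht : t ∈ Ioo (-R) (-(C + R) / 2))
    (hQ : eulerQuadratic C R D t ≠ 0) :
    eulerSubstDeriv C R t • (((eulerSubst C R t : ℂ) - D) *
        (√((eulerSubst C R t - C) * (eulerSubst C R t - R)) : ℂ))⁻¹ =
      2 / eulerQuadratic C R D t := by
  obtain ⟨htR, htC, hd⟩ := bounds_of_mem_Ioo_neg_neg_add_div_two ht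
  have hd' : (2 * t + C + R : ℂ) ≠ 0 := by exact_mod_cast hd.ne
  have hprod : ((t + C) * (t + R) : ℂ) ≠ 0 := by
    exact_mod_cast (mul_neg_of_neg_of_pos htC htR).ne
  rw [sqrt_eulerSubst_sub_mul_sub ht, ofReal_eulerSubst_sub D hd.ne, eulerSubst_add_self hd.ne,
    Complex.real_smul, eulerSubstDeriv]
  push_cast
  rw [div_mul_div_comm, inv_div, div_mul_div_comm,
    div_eq_div_iff (mul_ne_zero (pow_ne_zero 2 hd') (mul_ne_zero (neg_ne_zero.2 hQ) hprod)) hQ]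
  ring

end EulerSubst

end

/-- Euler substitution: for C < 0 < R and D ∈ ℂ with Im(D) ≠ 0,
∫_R^∞ dx/((x−D)√((x−C)(x−R))) = ∫_{−R}^{−(C+R)/2} 2dt/(t² + 2Dt + C(D−R) + DR);
moreover −R < −(C+R)/2, the quadratic factors as (t − r⁺)(t − r⁻) with
r^± = −D ± √((D−C)(D−R)), and it has no real roots. -/
theorem euler_substitution_integral
    (C R : ℝ) (hC : C < 0) (hR : 0 < R)
    (D : ℂ) (hD : D.im ≠ 0)
    (rp rm : ℂ)
    (hrp : rp = -D + ((D - (C : ℂ)) * (D - (R : ℂ))) ^ (1 / 2 : ℂ))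
    (hrm : rm = -D - ((D - (C : ℂ)) * (D - (R : ℂ))) ^ (1 / 2 : ℂ)) :
    (-R < -(C + R) / 2) ∧
    (∀ t : ℂ, t ^ 2 + 2 * D * t + (C : ℂ) * (D - (R : ℂ)) + D * (R : ℂ) =
      (t - rp) * (t - rm)) ∧
    (∀ t : ℝ, ((t : ℂ)) ^ 2 + 2 * D * (t : ℂ) + (C : ℂ) * (D - (R : ℂ)) + D * (R : ℂ) ≠ 0) ∧
    (∫ x in Set.Ioi R,
        (((x : ℂ) - D) * ((Real.sqrt ((x - C) * (x - R)) : ℝ) : ℂ))⁻¹) =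
      ∫ t in (-R)..(-(C + R) / 2),
        2 / (((t : ℂ)) ^ 2 + 2 * D * (t : ℂ) + (C : ℂ) * (D - (R : ℂ)) + D * (R : ℂ)) := by
  have hCR : C < R := hC.trans hR
  have hQ := eulerQuadratic_ofReal_ne_zero hCR.ne hD
  have hroot : (((D - C) * (D - R)) ^ (1 / 2 : ℂ)) ^ 2 = (D - C) * (D - R) := by
    simpa only [Nat.cast_ofNat, one_div] using Complex.cpow_nat_inv_pow ((D - C) * (D - R)) two_ne_zero
  refine ⟨by linarith, fun t => ?_, hQ, ?_⟩
  · rw [hrp, hrm]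
    exact eulerQuadratic_eq_mul_sub_mul_sub hroot t
  · rw [integral_Ioi_eq_integral_eulerSubst hCR, intervalIntegral.integral_of_le (by linarith),
      integral_Ioc_eq_integral_Ioo]
    exact setIntegral_congr_fun measurableSet_Ioo fun t ht =>
      eulerSubstDeriv_smul_integrand ht (hQ t)
end

section
/- Let Y be a random variable with probability density f(x) = Σ_{i=1}^n ω_i η_i e^{−η_i x} on (0, ∞) (a finite mixture of exponentials), where n ≥ 1, η_i > 0, ω_i > 0 and Σ_{i=1}^n ω_i = 1, and let A₀ > 0 and K' > 0. Then the perpetual-put payoff expectation is given explicitly by: if K' ≤ A₀, E[(K' − A₀ e^{−Y})⁺] = Σ_{i=1}^n ω_i (K'/A₀)^{η_i} · K'/(1 + η_i); and if K' ≥ A₀, E[(K' − A₀ e^{−Y})⁺] = Σ_{i=1}^n ω_i ( K' − A₀ · η_i/(1 + η_i) ), where x⁺ := max{x, 0}. -/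
/-! The payoff `(K - A e^{-x})⁺` vanishes for `x ≤ c` and equals `K - A e^{-x}` for `x > c`, where
`c = log (A / K)` if `K ≤ A` and `c = 0` otherwise. Hence the expectation is
`∫_c^∞ (K - A e^{-x}) f(x) dx`; against a component `η e^{-ηx}` this is an integral of the two
exponentials `e^{-ηx}` and `e^{-(1+η)x}`, equal to `K e^{-ηc} - A η/(1+η) e^{-(1+η)c}`.
Substituting `e^{-c} = K / A`, respectively `c = 0`, gives the two formulas. -/

open MeasureTheory Set Real

lemma integral_exp_neg_mul_Ioi {b : ℝ} (hb : 0 < b) (c : ℝ) :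
    ∫ x in Ioi c, exp (-b * x) = exp (-b * c) / b := by
  rw [integral_exp_mul_Ioi (neg_neg_iff_pos.2 hb), neg_div_neg_eq]

lemma sub_mul_exp_neg_mul_mul_exp_neg_mul (K A η x : ℝ) :
    (K - A * exp (-x)) * (η * exp (-η * x)) =
      K * η * exp (-η * x) - A * η * exp (-(1 + η) * x) := by
  rw [show -(1 + η) * x = -x + -η * x by ring, exp_add]
  ring

section ExponentialComponent

variable {η : ℝ} (hη : 0 < η) (K A c : ℝ)
include hη

lemma integrableOn_Ioi_sub_mul_exp_neg_mul_mul_exp_neg_mul :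
    IntegrableOn (fun x => (K - A * exp (-x)) * (η * exp (-η * x))) (Ioi c) := by
  simp_rw [sub_mul_exp_neg_mul_mul_exp_neg_mul]
  exact ((exp_neg_integrableOn_Ioi c hη).const_mul _).sub
    ((exp_neg_integrableOn_Ioi c (by linarith)).const_mul _)

lemma integral_Ioi_sub_mul_exp_neg_mul_mul_exp_neg_mul :
    ∫ x in Ioi c, (K - A * exp (-x)) * (η * exp (-η * x)) =
      K * exp (-η * c) - A * (η / (1 + η)) * exp (-(1 + η) * c) := by
  have h1η : 0 < 1 + η := by linarith
  simp_rw [sub_mul_exp_neg_mul_mul_exp_neg_mul]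
  rw [integral_sub ((exp_neg_integrableOn_Ioi c hη).const_mul _)
      ((exp_neg_integrableOn_Ioi c h1η).const_mul _),
    integral_const_mul, integral_const_mul,
    integral_exp_neg_mul_Ioi hη, integral_exp_neg_mul_Ioi h1η]
  field_simp

end ExponentialComponent

lemma integral_Ioi_sub_mul_exp_neg_mul_mul_sum {ι : Type*} (s : Finset ι)
    (ω η : ι → ℝ) (hη : ∀ i ∈ s, 0 < η i) (K A c : ℝ) :
    ∫ x in Ioi c, (K - A * exp (-x)) * ∑ i ∈ s, ω i * η i * exp (-η i * x) =
      ∑ i ∈ s, ω i * (K * exp (-η i * c) - A * (η i / (1 + η i)) * exp (-(1 + η i) * c)) := by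
  have hterm (x : ℝ) (i : ι) : (K - A * exp (-x)) * (ω i * η i * exp (-η i * x)) =
      ω i * ((K - A * exp (-x)) * (η i * exp (-η i * x))) := by ring
  simp_rw [Finset.mul_sum, hterm]
  rw [integral_finsetSum _ fun i hi =>
    (integrableOn_Ioi_sub_mul_exp_neg_mul_mul_exp_neg_mul (hη i hi) K A c).const_mul (ω i)]
  refine Finset.sum_congr rfl fun i hi => ?_
  rw [integral_const_mul, integral_Ioi_sub_mul_exp_neg_mul_mul_exp_neg_mul (hη i hi)]

lemma setIntegral_Ioi_max_mul_eq {f g : ℝ → ℝ} {a c : ℝ} (hac : a ≤ c)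
    (hneg : ∀ x ∈ Ioc a c, f x ≤ 0) (hpos : ∀ x ∈ Ioi c, 0 ≤ f x) :
    ∫ x in Ioi a, max (f x) 0 * g x = ∫ x in Ioi c, f x * g x := by
  rw [setIntegral_eq_of_subset_of_forall_sdiff_eq_zero measurableSet_Ioi (Ioi_subset_Ioi hac)]
  · exact setIntegral_congr_fun measurableSet_Ioi fun x hx => by rw [max_eq_left (hpos x hx)]
  · rintro x ⟨hxa, hxc⟩
    rw [max_eq_right (hneg x ⟨hxa, not_lt.1 hxc⟩), zero_mul]

section Strike

variable {A K : ℝ} (hA : 0 < A) (hK : 0 < K)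
include hA hK

lemma le_mul_exp_neg_iff_le_log_div {x : ℝ} : K ≤ A * exp (-x) ↔ x ≤ log (A / K) := by
  rw [le_log_iff_exp_le (div_pos hA hK), le_div_iff₀ hK, exp_neg, ← div_eq_mul_inv,
    le_div_iff₀ (exp_pos x), mul_comm]

lemma exp_neg_mul_log_div (t : ℝ) : exp (-t * log (A / K)) = (K / A) ^ t := by
  rw [rpow_def_of_pos (div_pos hK hA), ← inv_div, log_inv]
  ring_nf

end Strike

theorem perpetual_put_mixture_of_exponentials_general
    (n : ℕ) (η ω : Fin n → ℝ)
    (hη : ∀ i, 0 < η i)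
    (A₀ K' : ℝ) (hA : 0 < A₀) (hK : 0 < K') :
    (K' ≤ A₀ →
      (∫ x in Set.Ioi (0 : ℝ),
          max (K' - A₀ * Real.exp (-x)) 0 * (∑ i, ω i * η i * Real.exp (-(η i) * x))) =
        ∑ i, ω i * (K' / A₀) ^ (η i) * (K' / (1 + η i))) ∧
    (A₀ ≤ K' →
      (∫ x in Set.Ioi (0 : ℝ),
          max (K' - A₀ * Real.exp (-x)) 0 * (∑ i, ω i * η i * Real.exp (-(η i) * x))) =
        ∑ i, ω i * (K' - A₀ * (η i / (1 + η i)))) := by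
  have hmix := integral_Ioi_sub_mul_exp_neg_mul_mul_sum Finset.univ ω η (fun i _ => hη i)
  constructor
  · intro h
    set c := log (A₀ / K')
    have hc : 0 ≤ c := log_nonneg ((one_le_div hK).2 h)
    have hneg : ∀ x ∈ Ioc 0 c, K' - A₀ * exp (-x) ≤ 0 := fun x hx =>
      sub_nonpos.2 ((le_mul_exp_neg_iff_le_log_div hA hK).2 hx.2)
    have hpos : ∀ x ∈ Ioi c, 0 ≤ K' - A₀ * exp (-x) := fun x hx =>
      sub_nonneg.2 (not_le.1 ((le_mul_exp_neg_iff_le_log_div hA hK).not.2 hx.not_ge)).le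
    rw [setIntegral_Ioi_max_mul_eq hc hneg hpos, hmix]
    refine Finset.sum_congr rfl fun i _ => ?_
    have h1η : 1 + η i ≠ 0 := by linarith [hη i]
    rw [exp_neg_mul_log_div hA hK, exp_neg_mul_log_div hA hK, rpow_add (div_pos hK hA),
      rpow_one]
    field_simp
    ring
  · intro h
    have hpos : ∀ x ∈ Ioi 0, 0 ≤ K' - A₀ * exp (-x) := fun x hx =>
      sub_nonneg.2 ((mul_le_of_le_one_right hA.le (exp_le_one_iff.2 (neg_nonpos.2 hx.le))).trans h)
    rw [setIntegral_Ioi_max_mul_eq le_rfl (fun x hx => absurd hx.2 hx.1.not_ge) hpos, hmix]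
    simp

/-- For Y with finite-mixture-of-exponentials density
f(x) = Σ ωᵢηᵢe^{−ηᵢx} on (0, ∞), A₀ > 0 and K' > 0, the perpetual-put payoff expectation:
if K' ≤ A₀ then E[(K' − A₀e^{−Y})⁺] = Σ ωᵢ (K'/A₀)^{ηᵢ}·K'/(1+ηᵢ), and
if K' ≥ A₀ then E[(K' − A₀e^{−Y})⁺] = Σ ωᵢ (K' − A₀·ηᵢ/(1+ηᵢ)). -/
theorem perpetual_put_mixture_of_exponentials
    (n : ℕ) (hn : 1 ≤ n) (η ω : Fin n → ℝ)
    (hη : ∀ i, 0 < η i) (hω : ∀ i, 0 < ω i) (hsum : ∑ i, ω i = 1)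
    (A₀ K' : ℝ) (hA : 0 < A₀) (hK : 0 < K') :
    (K' ≤ A₀ →
      (∫ x in Set.Ioi (0 : ℝ),
          max (K' - A₀ * Real.exp (-x)) 0 * (∑ i, ω i * η i * Real.exp (-(η i) * x))) =
        ∑ i, ω i * (K' / A₀) ^ (η i) * (K' / (1 + η i))) ∧
    (A₀ ≤ K' →
      (∫ x in Set.Ioi (0 : ℝ),
          max (K' - A₀ * Real.exp (-x)) 0 * (∑ i, ω i * η i * Real.exp (-(η i) * x))) =
        ∑ i, ω i * (K' - A₀ * (η i / (1 + η i)))) :=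
  perpetual_put_mixture_of_exponentials_general n η ω hη A₀ K' hA hK
end
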